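/- arXiv:2410.13129 — 10 statements merged into one kernel-verified Lean document; each statement's English description precedes it below -/
import Mathlib

section
/- Let A = T[a_0,...,a_{n-1}] be a symmetric Toeplitz matrix with S_A = {i in [0,n-1] : a_i ≠ 0}, and let G(A) be its weighted Toeplitz graph on vertex set {1,...,n} where i ~ j iff |i-j| ∈ S_A. If u_1, u_2, v_1, v_2 are vertices lying in the same connected component C of G(A) with u_1 - v_1 = u_2 - v_2 ∈ S_A, then the number of vertices of C in the integer interval [v_1, u_1] equals the number of vertices of C in [v_2, u_2]. -/
/-- Adjacency in the weighted Toeplitz graph `G(A)` of the symmetric Toeplitz matrix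
`A = T[a 0, ..., a (n-1)]`: vertices are the integers `1, ..., n`, and `u ~ v` iff
`|u - v| ∈ S_A = {i : a i ≠ 0}` (loops allowed when `a 0 ≠ 0`). -/
def TAdj (n : ℕ) (a : ℕ → ℝ) (u v : ℤ) : Prop :=
  1 ≤ u ∧ u ≤ n ∧ 1 ≤ v ∧ v ≤ n ∧ a (u - v).natAbs ≠ 0

/-- `TReach n a u v` : `u` and `v` lie in the same connected component of `G(A)`. -/
def TReach (n : ℕ) (a : ℕ → ℝ) : ℤ → ℤ → Prop :=
  Relation.ReflTransGen (TAdj n a)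

lemma reach_step (n : ℕ) (a : ℕ → ℝ) (s : ℕ) (hs : a s ≠ 0) (u x : ℤ)
    (h1 : 1 ≤ x) (h2 : x + s ≤ n) :
    TReach n a u x ↔ TReach n a u (x + s) := by
  have e1 : (x - (x + (s:ℤ))).natAbs = s := by omega
  have e2 : ((x + (s:ℤ)) - x).natAbs = s := by omega
  have hadj : TAdj n a x (x + s) := ⟨h1, by omega, by omega, h2, by rw [e1]; exact hs⟩
  have hadj' : TAdj n a (x + s) x := ⟨by omega, h2, h1, by omega, by rw [e2]; exact hs⟩
  exact ⟨fun h => h.tail hadj, fun h => h.tail hadj'⟩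

lemma reach_nsmul (n : ℕ) (a : ℕ → ℝ) (s : ℕ) (hs : a s ≠ 0) (u : ℤ) (k : ℕ) :
    ∀ x : ℤ, 1 ≤ x → x + (k:ℤ) * s ≤ n →
      (TReach n a u x ↔ TReach n a u (x + (k:ℤ) * s)) := by
  induction k with
  | zero => intro x _ _; simp
  | succ k ih =>
    intro x h1 h2
    have hk : (0:ℤ) ≤ (k:ℤ) * s := by positivity
    have e : x + ((k:ℤ)+1) * s = (x + s) + (k:ℤ) * s := by ring
    have e' : ((k+1 : ℕ):ℤ) = (k:ℤ) + 1 := by push_cast; ring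
    rw [e', e] at h2 ⊢
    have hxs : x + (s:ℤ) ≤ n := by linarith
    exact (reach_step n a s hs u x h1 hxs).trans (ih (x + s) (by linarith) h2)

lemma reach_dvd (n : ℕ) (a : ℕ → ℝ) (s : ℕ) (hs : a s ≠ 0) (u : ℤ) :
    ∀ x y : ℤ, 1 ≤ x → x ≤ n → 1 ≤ y → y ≤ n → (s:ℤ) ∣ (y - x) →
      (TReach n a u x ↔ TReach n a u y) := by
  have main : ∀ x y : ℤ, 1 ≤ x → y ≤ n → x ≤ y → (s:ℤ) ∣ (y - x) →
      (TReach n a u x ↔ TReach n a u y) := by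
    intro x y hx hy hxy ⟨m, hm⟩
    by_cases h0 : s = 0
    · subst h0
      simp only [Nat.cast_zero, zero_mul] at hm
      have : y = x := by omega
      rw [this]
    · have hm0 : 0 ≤ m := by
        nlinarith [hm, hxy, (by omega : (0:ℤ) < s)]
      have hy' : y = x + (m.toNat : ℤ) * s := by
        have : (m.toNat : ℤ) = m := Int.toNat_of_nonneg hm0
        rw [this]; linarith [hm]
      rw [hy']
      exact reach_nsmul n a s hs u m.toNat x hx (by rw [← hy']; exact hy)
  intro x y hx1 hx2 hy1 hy2 hd
  rcases le_total x y with h | h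
  · exact main x y hx1 hy2 h hd
  · exact (main y x hy1 hx2 h (by obtain ⟨m, hm⟩ := hd; exact ⟨-m, by linarith⟩)).symm

/-- If `u₁, u₂, v₁, v₂` lie in one component `C` of `G(A)` with
`u₁ - v₁ = u₂ - v₂ = s ∈ S_A`, then `|V(C) ∩ [v₁,u₁]| = |V(C) ∩ [v₂,u₂]|`. -/
theorem stmt_0 (n : ℕ) (a : ℕ → ℝ) (s : ℕ) (hs : a s ≠ 0)
    (u₁ u₂ v₁ v₂ : ℤ)
    (hu₁ : 1 ≤ u₁ ∧ u₁ ≤ n) (hu₂ : 1 ≤ u₂ ∧ u₂ ≤ n)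
    (hv₁ : 1 ≤ v₁ ∧ v₁ ≤ n) (hv₂ : 1 ≤ v₂ ∧ v₂ ≤ n)
    (h₁ : u₁ - v₁ = s) (h₂ : u₂ - v₂ = s)
    (r₂ : TReach n a u₁ u₂) (r₃ : TReach n a u₁ v₁) (r₄ : TReach n a u₁ v₂) :
    ({x : ℤ | TReach n a u₁ x} ∩ Set.Icc v₁ u₁).ncard
      = ({x : ℤ | TReach n a u₁ x} ∩ Set.Icc v₂ u₂).ncard := by
  by_cases hs0 : s = 0
  · have hA : ({x : ℤ | TReach n a u₁ x} ∩ Set.Icc v₁ u₁) = {v₁} := by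
      ext z
      simp only [Set.mem_inter_iff, Set.mem_setOf_eq, Set.mem_Icc, Set.mem_singleton_iff]
      constructor
      · rintro ⟨_, h⟩; omega
      · rintro rfl; exact ⟨r₃, le_refl _, by omega⟩
    have hB : ({x : ℤ | TReach n a u₁ x} ∩ Set.Icc v₂ u₂) = {v₂} := by
      ext z
      simp only [Set.mem_inter_iff, Set.mem_setOf_eq, Set.mem_Icc, Set.mem_singleton_iff]
      constructor
      · rintro ⟨_, h⟩; omega
      · rintro rfl; exact ⟨r₄, le_refl _, by omega⟩
    rw [hA, hB, Set.ncard_singleton, Set.ncard_singleton]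
  · have hpos : (0:ℤ) < s := by omega
    set C : Set ℤ := {x : ℤ | TReach n a u₁ x} with hC
    have key : ∀ x y : ℤ, 1 ≤ x → x ≤ n → 1 ≤ y → y ≤ n → (s:ℤ) ∣ (y - x) →
        (x ∈ C ↔ y ∈ C) := fun x y hx1 hx2 hy1 hy2 hd =>
      reach_dvd n a s hs u₁ x y hx1 hx2 hy1 hy2 hd
    set φ : ℤ → ℤ := fun x => v₂ + (x - v₂) % s with hφ
    have hφmem : ∀ x, v₂ ≤ φ x ∧ φ x < u₂ := by
      intro x
      have h1 := Int.emod_nonneg (x - v₂) (by omega : (s:ℤ) ≠ 0)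
      have h2 := Int.emod_lt_of_pos (x - v₂) hpos
      constructor <;> simp only [hφ] <;> omega
    have hφdvd : ∀ x, (s:ℤ) ∣ x - φ x := by
      intro x
      refine ⟨(x - v₂) / s, ?_⟩
      have := Int.emod_add_mul_ediv (x - v₂) s
      simp only [hφ]; linarith
    have hφfix : ∀ y, v₂ ≤ y → y < u₂ → φ y = y := by
      intro y h1 h2
      simp only [hφ]
      rw [Int.emod_eq_of_lt (by omega) (by omega)]
      ring
    have hφcongr : ∀ x x', (s:ℤ) ∣ x - x' → φ x = φ x' := by
      intro x x' hd
      have h1 : x ≡ x' [ZMOD (s:ℤ)] := (Int.modEq_iff_dvd.mpr (by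
        obtain ⟨m, hm⟩ := hd; exact ⟨-m, by linarith⟩))
      have h2 : x - v₂ ≡ x' - v₂ [ZMOD (s:ℤ)] := h1.sub_right v₂
      simp only [hφ, Int.ModEq] at h2 ⊢
      rw [h2]
    set ψ : ℤ → ℤ := fun x => if x = u₁ then u₂ else φ x with hψ
    have hu₁C : u₁ ∈ C := Relation.ReflTransGen.refl
    have himg : ψ '' (C ∩ Set.Icc v₁ u₁) = C ∩ Set.Icc v₂ u₂ := by
      apply Set.Subset.antisymm
      · rintro _ ⟨x, ⟨hxC, hxI⟩, rfl⟩
        simp only [Set.mem_Icc] at hxI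
        by_cases hx : x = u₁
        · simp only [hψ, if_pos hx]
          exact ⟨r₂, by simp [Set.mem_Icc]; omega⟩
        · simp only [hψ, if_neg hx]
          obtain ⟨hm1, hm2⟩ := hφmem x
          refine ⟨?_, by simp [Set.mem_Icc]; omega⟩
          exact (key x (φ x) (by omega) (by omega) (by omega) (by omega)
            (dvd_sub_comm.mp (hφdvd x))).mp hxC
      · rintro y ⟨hyC, hyI⟩
        simp only [Set.mem_Icc] at hyI
        by_cases hy : y = u₂
        · refine ⟨u₁, ⟨hu₁C, by simp [Set.mem_Icc]; omega⟩, ?_⟩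
          simp only [hψ, if_pos rfl, hy]
        · have hyu : y < u₂ := by omega
          refine ⟨v₁ + (y - v₁) % s, ⟨?_, ?_⟩, ?_⟩
          · have h1 := Int.emod_nonneg (y - v₁) (by omega : (s:ℤ) ≠ 0)
            have h2 := Int.emod_lt_of_pos (y - v₁) hpos
            have hd : (s:ℤ) ∣ y - (v₁ + (y - v₁) % s) := by
              refine ⟨(y - v₁) / s, ?_⟩
              have := Int.emod_add_mul_ediv (y - v₁) s
              linarith
            exact (key y (v₁ + (y - v₁) % s) (by omega) (by omega) (by omega) (by omega)
              (by obtain ⟨m, hm⟩ := hd; exact ⟨-m, by linarith⟩)).mp hyC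
          · have h1 := Int.emod_nonneg (y - v₁) (by omega : (s:ℤ) ≠ 0)
            have h2 := Int.emod_lt_of_pos (y - v₁) hpos
            simp [Set.mem_Icc]; omega
          · have h1 := Int.emod_nonneg (y - v₁) (by omega : (s:ℤ) ≠ 0)
            have h2 := Int.emod_lt_of_pos (y - v₁) hpos
            have hne : v₁ + (y - v₁) % s ≠ u₁ := by omega
            simp only [hψ, if_neg hne]
            have hd : (s:ℤ) ∣ (v₁ + (y - v₁) % s) - y := by
              refine ⟨-((y - v₁) / s), ?_⟩
              have := Int.emod_add_mul_ediv (y - v₁) s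
              linarith
            rw [hφcongr _ y hd, hφfix y hyI.1 hyu]
    have hinj : Set.InjOn ψ (C ∩ Set.Icc v₁ u₁) := by
      rintro x₁ ⟨_, hx₁⟩ x₂ ⟨_, hx₂⟩ heq
      simp only [Set.mem_Icc] at hx₁ hx₂
      by_cases e1 : x₁ = u₁ <;> by_cases e2 : x₂ = u₁
      · rw [e1, e2]
      · exfalso
        simp only [hψ, if_pos e1, if_neg e2] at heq
        have := (hφmem x₂).2; omega
      · exfalso
        simp only [hψ, if_neg e1, if_pos e2] at heq
        have := (hφmem x₁).2; omega
      · simp only [hψ, if_neg e1, if_neg e2] at heq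
        have hd1 := hφdvd x₁
        have hd2 := hφdvd x₂
        have hd : (s:ℤ) ∣ x₁ - x₂ := by
          obtain ⟨m1, hm1⟩ := hd1; obtain ⟨m2, hm2⟩ := hd2
          exact ⟨m1 - m2, by rw [heq] at hm1; rw [mul_sub]; linarith⟩
        have habs : |x₁ - x₂| < (s:ℤ) := by rw [abs_lt]; omega
        have := Int.eq_zero_of_abs_lt_dvd hd habs
        omega
    calc (C ∩ Set.Icc v₁ u₁).ncard = (ψ '' (C ∩ Set.Icc v₁ u₁)).ncard :=
          (Set.ncard_image_of_injOn hinj).symm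
      _ = (C ∩ Set.Icc v₂ u₂).ncard := by rw [himg]
end

section
/- Every connected component of a weighted Toeplitz graph is isomorphic, as an edge-weighted graph, to a weighted Toeplitz graph under the normalized labeling of its vertex set. Precisely: if C is a component of G(A) for a symmetric Toeplitz matrix A, with |V(C)| = t, then the order-preserving bijection ψ from V(C) to {1,...,t} is a weighted graph isomorphism from C onto G(B) for some symmetric Toeplitz matrix B of order t. -/
/-- Each component of a weighted Toeplitz graph is isomorphic, under its normalized
labeling `ψ : V(C) → {1,...,t}`, to a weighted Toeplitz graph `G(B)` for some
symmetric Toeplitz matrix `B = T[b 0, ..., b (t-1)]` of order `t`. -/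
theorem stmt_2 (n : ℕ) (a : ℕ → ℝ) (w : ℤ) (hw : 1 ≤ w ∧ w ≤ n)
    (C : Set ℤ) (hC : C = {x : ℤ | TReach n a w x})
    (t : ℕ) (ht : t = C.ncard)
    (ψ : ℤ → ℤ) (hbij : Set.BijOn ψ C (Set.Icc 1 (t : ℤ)))
    (hmono : ∀ u ∈ C, ∀ v ∈ C, u < v → ψ u < ψ v) :
    ∃ b : ℕ → ℝ, ∀ u ∈ C, ∀ v ∈ C,
      (TAdj n a u v ↔ TAdj t b (ψ u) (ψ v)) ∧
      (TAdj n a u v → a (u - v).natAbs = b (ψ u - ψ v).natAbs) := by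
  classical
  -- basic facts about C
  have hbound : ∀ x ∈ C, 1 ≤ x ∧ x ≤ (n : ℤ) := by
    intro x hx
    rw [hC] at hx
    induction hx with
    | refl => exact hw
    | tail _ hadj _ => exact ⟨hadj.2.2.1, hadj.2.2.2.1⟩
  have hClosed : ∀ x ∈ C, ∀ y : ℤ, 1 ≤ y → y ≤ (n : ℤ) → a (x - y).natAbs ≠ 0 → y ∈ C := by
    intro x hx y h1 h2 ha
    have hbx := hbound x hx
    rw [hC] at hx ⊢
    exact Relation.ReflTransGen.tail hx ⟨hbx.1, hbx.2, h1, h2, ha⟩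
  have hψmem : ∀ x ∈ C, 1 ≤ ψ x ∧ ψ x ≤ (t : ℤ) := by
    intro x hx
    have := hbij.mapsTo hx
    simpa [Set.mem_Icc] using this
  have mono_le : ∀ u ∈ C, ∀ v ∈ C, ψ u ≤ ψ v → u ≤ v := by
    intro u hu v hv h
    by_contra hcon
    push_neg at hcon
    have := hmono v hv u hu hcon
    omega
  have mono_lt_rev : ∀ u ∈ C, ∀ v ∈ C, ψ u < ψ v → u < v := by
    intro u hu v hv h
    by_contra hcon
    push_neg at hcon
    rcases eq_or_lt_of_le hcon with h' | h'
    · subst h'; omega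
    · have := hmono v hv u hu h'; omega
  have inj : ∀ u ∈ C, ∀ v ∈ C, ψ u = ψ v → u = v := by
    intro u hu v hv h
    have h1 := mono_le u hu v hv (le_of_eq h)
    have h2 := mono_le v hv u hu (le_of_eq h.symm)
    omega
  have mono_le_fwd : ∀ u ∈ C, ∀ v ∈ C, u ≤ v → ψ u ≤ ψ v := by
    intro u hu v hv h
    rcases eq_or_lt_of_le h with h' | h'
    · subst h'; exact le_rfl
    · exact le_of_lt (hmono u hu v hv h')
  have surj : ∀ j : ℤ, 1 ≤ j → j ≤ (t : ℤ) → ∃ z ∈ C, ψ z = j := by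
    intro j h1 h2
    have hj : j ∈ Set.Icc 1 (t : ℤ) := Set.mem_Icc.2 ⟨h1, h2⟩
    obtain ⟨z, hzC, hz⟩ := hbij.surjOn hj
    exact ⟨z, hzC, hz⟩
  -- main translation lemma
  have main : ∀ s : ℤ, 1 ≤ s → a s.natAbs ≠ 0 → ∀ u' ∈ C, u' + s ∈ C →
      ∀ y ∈ C, ψ y + (ψ (u' + s) - ψ u') ≤ (t : ℤ) →
        y + s ∈ C ∧ ψ (y + s) = ψ y + (ψ (u' + s) - ψ u') := by
    intro s hs1 has u' hu' hu's
    set k := ψ (u' + s) - ψ u' with hk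
    have hk1 : 1 ≤ k := by
      have := hmono u' hu' (u' + s) hu's (by omega)
      omega
    have step_up : ∀ x ∈ C, x + s ∈ C → ψ (x + s) = ψ x + k →
        ∀ y ∈ C, ψ y = ψ x + 1 → ψ y + k ≤ (t : ℤ) →
          y + s ∈ C ∧ ψ (y + s) = ψ y + k := by
      intro x hx hxs hψxs y hy hψy hyk
      have hψx := hψmem x hx
      obtain ⟨z, hzC, hψz⟩ := surj (ψ x + k + 1) (by omega) (by omega)
      have hzx : x + s < z := mono_lt_rev (x + s) hxs z hzC (by omega)
      have hzn := hbound z hzC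
      have hbx := hbound x hx
      have hzsC : z - s ∈ C := by
        refine hClosed z hzC (z - s) (by omega) (by omega) ?_
        rw [show z - (z - s) = s by ring]; exact has
      have hψzs : ψ x < ψ (z - s) := hmono x hx (z - s) hzsC (by omega)
      have hyzs : y ≤ z - s := mono_le y hy (z - s) hzsC (by omega)
      have hby := hbound y hy
      have hysC : y + s ∈ C := by
        refine hClosed y hy (y + s) (by omega) (by omega) ?_
        rw [show y - (y + s) = -s by ring, Int.natAbs_neg]; exact has
      have hxy : x < y := mono_lt_rev x hx y hy (by omega)
      have h1 : ψ (x + s) < ψ (y + s) := hmono (x + s) hxs (y + s) hysC (by omega)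
      have h2 : z ≤ y + s := mono_le z hzC (y + s) hysC (by omega)
      have h3 : y + s = z := by omega
      exact ⟨h3 ▸ hzC, by rw [h3, hψz]; omega⟩
    have step_down : ∀ x ∈ C, x + s ∈ C → ψ (x + s) = ψ x + k →
        ∀ y ∈ C, ψ y = ψ x - 1 →
          y + s ∈ C ∧ ψ (y + s) = ψ y + k := by
      intro x hx hxs hψxs y hy hψy
      have hψx := hψmem x hx
      have hψyb := hψmem y hy
      have hψxsb := hψmem (x + s) hxs
      have hyx : y < x := mono_lt_rev y hy x hx (by omega)
      have hbxs := hbound (x + s) hxs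
      have hby := hbound y hy
      have hysC : y + s ∈ C := by
        refine hClosed y hy (y + s) (by omega) (by omega) ?_
        rw [show y - (y + s) = -s by ring, Int.natAbs_neg]; exact has
      have h1 : ψ (y + s) < ψ (x + s) := hmono (y + s) hysC (x + s) hxs (by omega)
      obtain ⟨z, hzC, hψz⟩ := surj (ψ x + k - 1) (by omega) (by omega)
      have h2 : y + s ≤ z := mono_le (y + s) hysC z hzC (by omega)
      have h3 : z < x + s := mono_lt_rev z hzC (x + s) hxs (by omega)
      have hbx := hbound x hx
      have hzsC : z - s ∈ C := by
        refine hClosed z hzC (z - s) (by omega) (by omega) ?_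
        rw [show z - (z - s) = s by ring]; exact has
      have h4 : ψ (z - s) < ψ x := hmono (z - s) hzsC x hx (by omega)
      have h5 : z - s ≤ y := mono_le (z - s) hzsC y hy (by omega)
      have h6 : y + s = z := by omega
      exact ⟨h6 ▸ hzC, by rw [h6, hψz]; omega⟩
    have hψu' := hψmem u' hu'
    have hψu's := hψmem (u' + s) hu's
    have up : ∀ m : ℕ, ∀ y ∈ C, ψ y = ψ u' + m → ψ y + k ≤ (t : ℤ) →
        y + s ∈ C ∧ ψ (y + s) = ψ y + k := by
      intro m
      induction m with
      | zero =>
        intro y hy hψy _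
        have : y = u' := inj y hy u' hu' (by omega)
        subst this
        exact ⟨hu's, by omega⟩
      | succ m ih =>
        intro y hy hψy hle
        have hψyb := hψmem y hy
        obtain ⟨p, hpC, hψp⟩ := surj (ψ y - 1) (by omega) (by omega)
        have hP := ih p hpC (by omega) (by omega)
        exact step_up p hpC hP.1 (by omega) y hy (by omega) hle
    have down : ∀ m : ℕ, ∀ y ∈ C, ψ y = ψ u' - m →
        y + s ∈ C ∧ ψ (y + s) = ψ y + k := by
      intro m
      induction m with
      | zero =>
        intro y hy hψy
        have : y = u' := inj y hy u' hu' (by omega)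
        subst this
        exact ⟨hu's, by omega⟩
      | succ m ih =>
        intro y hy hψy
        have hψyb := hψmem y hy
        obtain ⟨p, hpC, hψp⟩ := surj (ψ y + 1) (by omega) (by omega)
        have hP := ih p hpC (by omega)
        exact step_down p hpC hP.1 (by omega) y hy (by omega)
    intro y hy hle
    rcases le_total (ψ u') (ψ y) with h | h
    · exact up (ψ y - ψ u').toNat y hy (by omega) hle
    · exact down (ψ u' - ψ y).toNat y hy (by omega)
  -- ordered core lemma
  have ordered : ∀ u ∈ C, ∀ v ∈ C, ∀ p ∈ C, ∀ q ∈ C, u ≤ v → p ≤ q →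
      a (q - p).natAbs ≠ 0 → ψ v - ψ u = ψ q - ψ p → v - u = q - p := by
    intro u hu v hv p hp q hq huv hpq ha hψeq
    rcases eq_or_lt_of_le hpq with h | h
    · have hpq' : ψ p = ψ q := by rw [h]
      have huv' : u = v := inj u hu v hv (by omega)
      omega
    · have hq' : p + (q - p) ∈ C := by rw [show p + (q - p) = q by ring]; exact hq
      have hψv := hψmem v hv
      have hrw : p + (q - p) = q := by ring
      have hcond : ψ u + (ψ (p + (q - p)) - ψ p) ≤ (t : ℤ) := by rw [hrw]; omega
      have hres := main (q - p) (by omega) ha p hp hq' u hu hcond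
      rw [hrw] at hres
      have : u + (q - p) = v := inj (u + (q - p)) hres.1 v hv (by omega)
      omega
  have core : ∀ u ∈ C, ∀ v ∈ C, ∀ p ∈ C, ∀ q ∈ C, a (p - q).natAbs ≠ 0 →
      (ψ u - ψ v).natAbs = (ψ p - ψ q).natAbs → (u - v).natAbs = (p - q).natAbs := by
    intro u hu v hv p hp q hq ha hψeq
    rcases le_total u v with huv | huv <;> rcases le_total p q with hpq | hpq
    · have h1 := mono_le_fwd u hu v hv huv
      have h2 := mono_le_fwd p hp q hq hpq
      have ha' : a (q - p).natAbs ≠ 0 := by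
        rw [show (q - p).natAbs = (p - q).natAbs by omega]; exact ha
      have := ordered u hu v hv p hp q hq huv hpq ha' (by omega)
      omega
    · have h1 := mono_le_fwd u hu v hv huv
      have h2 := mono_le_fwd q hq p hp hpq
      have := ordered u hu v hv q hq p hp huv hpq ha (by omega)
      omega
    · have h1 := mono_le_fwd v hv u hu huv
      have h2 := mono_le_fwd p hp q hq hpq
      have ha' : a (q - p).natAbs ≠ 0 := by
        rw [show (q - p).natAbs = (p - q).natAbs by omega]; exact ha
      have := ordered v hv u hu p hp q hq huv hpq ha' (by omega)
      omega
    · have h1 := mono_le_fwd v hv u hu huv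
      have h2 := mono_le_fwd q hq p hp hpq
      have := ordered v hv u hu q hq p hp huv hpq ha (by omega)
      omega
  -- definition of b and conclusion
  refine ⟨fun k => if h : ∃ p : ℤ × ℤ, p.1 ∈ C ∧ p.2 ∈ C ∧ TAdj n a p.1 p.2 ∧
      (ψ p.1 - ψ p.2).natAbs = k then a (h.choose.1 - h.choose.2).natAbs else 0, ?_⟩
  intro u hu v hv
  have hbval : TAdj n a u v →
      (if h : ∃ p : ℤ × ℤ, p.1 ∈ C ∧ p.2 ∈ C ∧ TAdj n a p.1 p.2 ∧
          (ψ p.1 - ψ p.2).natAbs = (ψ u - ψ v).natAbs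
        then a (h.choose.1 - h.choose.2).natAbs else 0) = a (u - v).natAbs := by
    intro hadj
    have hex : ∃ p : ℤ × ℤ, p.1 ∈ C ∧ p.2 ∈ C ∧ TAdj n a p.1 p.2 ∧
        (ψ p.1 - ψ p.2).natAbs = (ψ u - ψ v).natAbs := ⟨(u, v), hu, hv, hadj, rfl⟩
    rw [dif_pos hex]
    obtain ⟨h1, h2, h3, h4⟩ := hex.choose_spec
    have := core u hu v hv _ h1 _ h2 h3.2.2.2.2 h4.symm
    rw [this]
  refine ⟨⟨?_, ?_⟩, ?_⟩
  · intro hadj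
    have hψu := hψmem u hu
    have hψv := hψmem v hv
    refine ⟨hψu.1, hψu.2, hψv.1, hψv.2, ?_⟩
    beta_reduce
    rw [hbval hadj]
    exact hadj.2.2.2.2
  · intro hadj'
    have hb := hadj'.2.2.2.2
    by_cases hex : ∃ p : ℤ × ℤ, p.1 ∈ C ∧ p.2 ∈ C ∧ TAdj n a p.1 p.2 ∧
        (ψ p.1 - ψ p.2).natAbs = (ψ u - ψ v).natAbs
    · obtain ⟨h1, h2, h3, h4⟩ := hex.choose_spec
      have heq := core u hu v hv _ h1 _ h2 h3.2.2.2.2 h4.symm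
      have hbu := hbound u hu
      have hbv := hbound v hv
      refine ⟨hbu.1, hbu.2, hbv.1, hbv.2, ?_⟩
      rw [heq]
      exact h3.2.2.2.2
    · exfalso
      apply hb
      beta_reduce
      rw [dif_neg hex]
  · intro hadj
    beta_reduce
    exact (hbval hadj).symm
end

section
/- Let A be a symmetric Toeplitz matrix and let C, C' be components of G(A) with M(C) < M(C'), where M(D) denotes the maximum vertex label in component D. Then C is isomorphic (as a weighted graph) to an induced subgraph of C'. Consequently, if C_1,...,C_k are the components of G(A) ordered so that M(C_1) < M(C_2) < ... < M(C_k), then C_1 ≲ C_2 ≲ ... ≲ C_k, where G ≲ H means G is isomorphic to an induced subgraph of H. -/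
lemma TAdj.symm' {n : ℕ} {a : ℕ → ℝ} {u v : ℤ} (h : TAdj n a u v) : TAdj n a v u := by
  obtain ⟨h1, h2, h3, h4, h5⟩ := h
  refine ⟨h3, h4, h1, h2, ?_⟩
  rwa [show v - u = -(u - v) by ring, Int.natAbs_neg]

lemma TReach.symm' {n : ℕ} {a : ℕ → ℝ} {u v : ℤ} (h : TReach n a u v) : TReach n a v u := by
  induction h with
  | refl => exact Relation.ReflTransGen.refl
  | tail _ hadj ih => exact Relation.ReflTransGen.head hadj.symm' ih

lemma treach_bounds {n : ℕ} {a : ℕ → ℝ} {w x : ℤ} (hw : 1 ≤ w ∧ w ≤ n) (h : TReach n a w x) :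
    1 ≤ x ∧ x ≤ n := by
  induction h with
  | refl => exact hw
  | tail _ hadj _ => exact ⟨hadj.2.2.1, hadj.2.2.2.1⟩

/-- If `C` and `C'` are components of `G(A)` with `M(C) < M(C')` (maximum vertex labels),
then `C` is isomorphic, as a weighted graph, to an induced subgraph of `C'`:
there is an injection `f : V(C) → V(C')` preserving adjacency, non-adjacency and weights. -/
theorem stmt_4 (n : ℕ) (a : ℕ → ℝ) (w w' : ℤ)
    (hw : 1 ≤ w ∧ w ≤ n) (hw' : 1 ≤ w' ∧ w' ≤ n)
    (C C' : Set ℤ)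
    (hC : C = {x : ℤ | TReach n a w x}) (hC' : C' = {x : ℤ | TReach n a w' x})
    (M M' : ℤ) (hM : IsGreatest C M) (hM' : IsGreatest C' M') (hlt : M < M') :
    ∃ f : ℤ → ℤ, Set.InjOn f C ∧ Set.MapsTo f C C' ∧
      ∀ u ∈ C, ∀ v ∈ C,
        (TAdj n a u v ↔ TAdj n a (f u) (f v)) ∧
        (TAdj n a u v → a (u - v).natAbs = a (f u - f v).natAbs) := by
  set d : ℤ := M' - M with hd
  have hd0 : 0 < d := by omega
  have hMn : M' ≤ n := (treach_bounds hw' (hC' ▸ hM'.1)).2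
  have hboundsC : ∀ x ∈ C, 1 ≤ x ∧ x ≤ n := by
    intro x hx; exact treach_bounds hw (hC ▸ hx)
  have hleM : ∀ x ∈ C, x ≤ M := fun x hx => hM.2 hx
  -- shift preserves adjacency for vertices of C
  have hshift : ∀ u ∈ C, ∀ v ∈ C, TAdj n a u v → TAdj n a (u + d) (v + d) := by
    intro u hu v hv h
    obtain ⟨h1, h2, h3, h4, h5⟩ := h
    refine ⟨by omega, by have := hleM u hu; omega, by omega,
      by have := hleM v hv; omega, ?_⟩
    rwa [show u + d - (v + d) = u - v by ring]
  have hreach : ∀ x ∈ C, TReach n a (w + d) (x + d) := by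
    intro x hx
    rw [hC] at hx
    induction hx with
    | refl => exact Relation.ReflTransGen.refl
    | @tail b c hpre hadj ih =>
      have hbC : b ∈ C := hC ▸ hpre
      have hcC : c ∈ C := hC ▸ hpre.tail hadj
      exact ih.tail (hshift b hbC c hcC hadj)
  have hwM' : TReach n a w' M' := by have := hM'.1; rwa [hC'] at this
  have hMd : TReach n a (w + d) M' := by
    have := hreach M hM.1
    rwa [show M + d = M' by omega] at this
  have hmaps : Set.MapsTo (fun x => x + d) C C' := by
    intro x hx
    rw [hC']
    exact (hwM'.trans hMd.symm').trans (hreach x hx)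
  refine ⟨fun x => x + d, fun x _ y _ h => add_right_cancel h, hmaps, ?_⟩
  intro u hu v hv
  constructor
  · constructor
    · exact hshift u hu v hv
    · rintro ⟨_, _, _, _, h5⟩
      obtain ⟨hu1, hu2⟩ := hboundsC u hu
      obtain ⟨hv1, hv2⟩ := hboundsC v hv
      refine ⟨hu1, hu2, hv1, hv2, ?_⟩
      rwa [show u + d - (v + d) = u - v by ring] at h5
  · intro _
    rw [show u + d - (v + d) = u - v by ring]
end

section
/- For every symmetric Toeplitz matrix A of order n there exist a permutation matrix P, a positive integer k, and irreducible symmetric Toeplitz matrices A_1,...,A_k such that P^T A P is the block diagonal matrix diag(A_1,...,A_k), and moreover A_i is a principal submatrix of A_j whenever i ≤ j. -/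
/-- `A` is a symmetric Toeplitz matrix: its `(i,j)`-entry depends only on `|i - j|`. -/
def IsSymmToeplitz {m : ℕ} (A : Matrix (Fin m) (Fin m) ℝ) : Prop :=
  ∀ i j k l : Fin m, ((i : ℤ) - (j : ℤ)).natAbs = ((k : ℤ) - (l : ℤ)).natAbs → A i j = A k l

/-- `A` is a Hankel matrix: its `(i,j)`-entry depends only on `i + j`. -/
def IsHankel {m : ℕ} (A : Matrix (Fin m) (Fin m) ℝ) : Prop :=
  ∀ i j k l : Fin m, (i : ℕ) + (j : ℕ) = (k : ℕ) + (l : ℕ) → A i j = A k l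

/-- `A` is reducible: some simultaneous permutation of its rows and columns puts it in
block upper triangular form `[[A₁, A₁₂], [0, A₂]]` with `A₁, A₂` square of order `≥ 1`. -/
def MatReducible {m : ℕ} (A : Matrix (Fin m) (Fin m) ℝ) : Prop :=
  ∃ (σ : Equiv.Perm (Fin m)) (r : ℕ), 0 < r ∧ r < m ∧
    ∀ i j : Fin m, r ≤ (σ i : ℕ) → (σ j : ℕ) < r → A i j = 0

/-- `A` is irreducible iff it is not reducible. -/
def MatIrreducible {m : ℕ} (A : Matrix (Fin m) (Fin m) ℝ) : Prop :=
  ¬ MatReducible A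

/-!
Since `A` is symmetric, its nonzero pattern is an undirected graph on the indices, and grouping the
indices by connected component puts `A` in block diagonal form with irreducible blocks. A
component `C` is closed under translating edges: if `A u v ≠ 0` and `x ∈ C`, then the point at
lag `v - u` from `x` lies in `C` whenever it is an index. For consecutive elements `a < a'` and
`b < b'` of `C` with `a ≤ b`, translating a nonzero edge `(a, b)` or `(a', b')` forces
`b' - b = a' - a`, so `A a b = A a' b'`: the principal submatrix on `C`, in increasing order, is
again Toeplitz. Finally, shifting the component with minimum `x` down by `x - y` maps it into the
component of any `y ≤ x`, so listing the components by decreasing minimum makes each block a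
principal submatrix of every later one.
-/

open Finset

namespace Matrix

variable {ι κ α : Type*}

section Reachable

variable [Zero α]

def Reachable (A : Matrix ι ι α) : ι → ι → Prop :=
  Relation.ReflTransGen fun v w => A v w ≠ 0

variable {A : Matrix ι ι α} {u v w : ι}

theorem Reachable.refl (v : ι) : A.Reachable v v := Relation.ReflTransGen.refl

theorem Reachable.trans (huv : A.Reachable u v) (hvw : A.Reachable v w) : A.Reachable u w :=
  Relation.ReflTransGen.trans huv hvw

theorem Reachable.tail (huv : A.Reachable u v) (hvw : A v w ≠ 0) : A.Reachable u w :=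
  Relation.ReflTransGen.tail huv hvw

theorem Reachable.symm (hA : A.IsSymm) (h : A.Reachable v w) : A.Reachable w v :=
  Relation.reflTransGen_swap.1 <|
    Relation.ReflTransGen.mono (fun a b hab => by rwa [Function.swap, hA.apply]) v w h

theorem Reachable.mem_of_closed {S : Set ι} (hS : ∀ v ∈ S, ∀ w, A v w ≠ 0 → w ∈ S)
    (h : A.Reachable v w) (hv : v ∈ S) : w ∈ S := by
  induction h with
  | refl => exact hv
  | tail _ hbc ih => exact hS _ ih _ hbc

theorem reachable_submatrix {c : κ → ι} (hc : Function.Injective c)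
    (hS : ∀ v ∈ Set.range c, ∀ w, A v w ≠ 0 → w ∈ Set.range c) {p q : κ}
    (h : A.Reachable (c p) (c q)) : (A.submatrix c c).Reachable p q := by
  suffices ∀ w, A.Reachable (c p) w → ∀ q, c q = w → (A.submatrix c c).Reachable p q from
    this _ h q rfl
  intro w hw
  induction hw with
  | refl => intro q hq; rw [hc hq]; exact .refl p
  | @tail b w hb hbw ih =>
    intro q hq
    obtain ⟨r, rfl⟩ := Reachable.mem_of_closed hS hb ⟨p, rfl⟩
    exact (ih r rfl).tail (by rwa [submatrix_apply, hq])

end Reachable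

section Components

variable [Zero α] [Fintype ι] [LinearOrder ι] {A : Matrix ι ι α} {v w : ι}

open Classical in
noncomputable def reachMin (A : Matrix ι ι α) (v : ι) : ι :=
  ({w | A.Reachable v w} : Finset ι).min' ⟨v, by simpa using Reachable.refl v⟩

theorem reachable_reachMin : A.Reachable v (A.reachMin v) := by
  classical exact (mem_filter.1 (min'_mem _ _)).2

theorem reachMin_le (h : A.Reachable v w) : A.reachMin v ≤ w := by
  classical exact min'_le _ _ (mem_filter.2 ⟨mem_univ w, h⟩)

theorem reachMin_eq_iff (hA : A.IsSymm) : A.reachMin v = A.reachMin w ↔ A.Reachable v w := by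
  refine ⟨fun h => reachable_reachMin.trans (h ▸ reachable_reachMin.symm hA), fun h => ?_⟩
  exact le_antisymm (reachMin_le (h.trans reachable_reachMin))
    (reachMin_le ((h.symm hA).trans reachable_reachMin))

noncomputable def componentMins (A : Matrix ι ι α) : Finset ι :=
  univ.image A.reachMin

/-- Components are listed by decreasing minimum, so that each block embeds into the later ones. -/
noncomputable def componentRoot (A : Matrix ι ι α) (i : Fin #A.componentMins) : ι :=
  A.componentMins.orderEmbOfFin rfl i.rev

noncomputable def componentIndex (A : Matrix ι ι α) (v : ι) : Fin #A.componentMins :=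
  ((A.componentMins.orderIsoOfFin rfl).symm ⟨A.reachMin v, mem_image_of_mem _ (mem_univ v)⟩).rev

theorem componentRoot_componentIndex : A.componentRoot (A.componentIndex v) = A.reachMin v := by
  simp [componentRoot, componentIndex, ← coe_orderIsoOfFin_apply]

theorem componentRoot_injective : Function.Injective A.componentRoot :=
  (orderEmbOfFin _ rfl).injective.comp Fin.rev_injective

theorem componentRoot_antitone : Antitone A.componentRoot :=
  fun _ _ h => (orderEmbOfFin _ rfl).monotone (Fin.rev_le_rev.2 h)

theorem exists_reachMin_eq_componentRoot (i : Fin #A.componentMins) :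
    ∃ u, A.reachMin u = A.componentRoot i := by
  obtain ⟨u, -, hu⟩ := mem_image.1 (orderEmbOfFin_mem A.componentMins rfl i.rev)
  exact ⟨u, hu⟩

theorem componentIndex_eq_iff (hA : A.IsSymm) {i : Fin #A.componentMins} :
    A.componentIndex v = i ↔ A.Reachable (A.componentRoot i) v := by
  obtain ⟨u, hu⟩ := exists_reachMin_eq_componentRoot i
  rw [← componentRoot_injective.eq_iff, componentRoot_componentIndex, ← hu, reachMin_eq_iff hA]
  exact ⟨fun h => (reachable_reachMin.symm hA).trans (h.symm hA),
    fun h => (reachable_reachMin.trans h).symm hA⟩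

theorem componentIndex_eq_of_ne_zero (hA : A.IsSymm) (h : A v w ≠ 0) :
    A.componentIndex v = A.componentIndex w :=
  ((componentIndex_eq_iff hA).2 (((componentIndex_eq_iff hA).1 rfl).tail h)).symm

theorem componentRoot_le {i : Fin #A.componentMins} (h : A.Reachable (A.componentRoot i) v) :
    A.componentRoot i ≤ v := by
  obtain ⟨u, hu⟩ := exists_reachMin_eq_componentRoot i
  rw [← hu] at h ⊢
  exact reachMin_le (reachable_reachMin.trans h)

theorem card_componentMins_pos [Nonempty ι] : 0 < #A.componentMins :=
  card_pos.2 (univ_nonempty.image _)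

end Components

section BlockDiagonal

variable [Fintype ι] [LinearOrder ι] [DecidableEq κ]

noncomputable def sigmaFiberOrderEquiv (f : ι → κ) : (Σ i : κ, Fin #{v | f v = i}) ≃ ι :=
  (Equiv.sigmaCongrRight fun i => (({v | f v = i} : Finset ι).orderIsoOfFin rfl).toEquiv.trans
    (Equiv.subtypeEquivRight fun v => by simp)).trans (Equiv.sigmaFiberEquiv f)

theorem submatrix_sigmaFiberOrderEquiv [Zero α] {A : Matrix ι ι α} {f : ι → κ}
    (hf : ∀ v w, A v w ≠ 0 → f v = f w) :
    A.submatrix (sigmaFiberOrderEquiv f) (sigmaFiberOrderEquiv f) =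
      blockDiagonal' fun i => A.submatrix (({v | f v = i} : Finset ι).orderEmbOfFin rfl)
        (({v | f v = i} : Finset ι).orderEmbOfFin rfl) := by
  ext ⟨i, p⟩ ⟨j, q⟩
  rcases eq_or_ne i j with rfl | hij
  · rw [blockDiagonal'_apply_eq]
    rfl
  · rw [blockDiagonal'_apply_ne _ _ _ hij]
    by_contra h
    have hp := orderEmbOfFin_mem ({v | f v = i} : Finset ι) rfl p
    have hq := orderEmbOfFin_mem ({v | f v = j} : Finset ι) rfl q
    simp only [mem_filter, mem_univ, true_and] at hp hq
    exact hij (hp ▸ hq ▸ hf _ _ h)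

end BlockDiagonal

end Matrix

theorem Finset.orderEmbOfFin_succ_le {α : Type*} [LinearOrder α] {s : Finset α} {p : ℕ}
    (hp : p + 1 < #s) {z : α} (hz : z ∈ s) (h : s.orderEmbOfFin rfl ⟨p, by omega⟩ < z) :
    s.orderEmbOfFin rfl ⟨p + 1, hp⟩ ≤ z := by
  obtain ⟨r, rfl⟩ : z ∈ Set.range (s.orderEmbOfFin rfl) := by simpa using hz
  rw [OrderEmbedding.lt_iff_lt] at h
  rw [OrderEmbedding.le_iff_le]
  exact Fin.le_def.2 (Fin.lt_def.1 h)

theorem matIrreducible_of_reachable {m : ℕ} {B : Matrix (Fin m) (Fin m) ℝ}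
    (hB : ∀ p q, B.Reachable p q) : MatIrreducible B := by
  rintro ⟨σ, r, hr0, hrm, hzero⟩
  let S : Set (Fin m) := {i | r ≤ σ i}
  have hS : ∀ i ∈ S, ∀ j, B i j ≠ 0 → j ∈ S :=
    fun i hi j hij => not_lt.1 fun hj => hij (hzero i j hi hj)
  have := (hB (σ.symm ⟨r, hrm⟩) (σ.symm ⟨0, by omega⟩)).mem_of_closed hS (by simp [S])
  exact hr0.not_ge (by simpa [S] using this)

theorem isSymmToeplitz_of_succ {m : ℕ} {B : Matrix (Fin m) (Fin m) ℝ} (hB : B.IsSymm)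
    (hstep : ∀ (p q : ℕ) (hp : p + 1 < m) (hq : q + 1 < m),
      B ⟨p, by omega⟩ ⟨q, by omega⟩ = B ⟨p + 1, hp⟩ ⟨q + 1, hq⟩) :
    IsSymmToeplitz B := by
  have hshift : ∀ (e p q : ℕ) (hp : p + e < m) (hq : q + e < m),
      B ⟨p, by omega⟩ ⟨q, by omega⟩ = B ⟨p + e, hp⟩ ⟨q + e, hq⟩ := by
    intro e
    induction e with
    | zero => intros; rfl
    | succ e ih =>
      intro p q hp hq
      rw [ih p q (by omega) (by omega)]
      exact hstep _ _ hp hq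
  have hdiff : ∀ i j k l : Fin m, (i : ℤ) - j = k - l → i ≤ k → B i j = B k l := by
    intro i j k l h hik
    convert hshift (k - i) i j (by omega) (by omega) using 2 <;> ext <;> dsimp only <;> omega
  intro i j k l h
  rcases Int.natAbs_eq_natAbs_iff.1 h with h | h
  · rcases le_total i k with hik | hki
    · exact hdiff i j k l h hik
    · exact (hdiff k l i j (by omega) hki).symm
  · rw [← hB.apply k l]
    rcases le_total i l with hil | hli
    · exact hdiff i j l k (by omega) hil
    · exact (hdiff l k i j (by omega) hli).symm

section Toeplitz

variable {n : ℕ} {A : Matrix (Fin n) (Fin n) ℝ} {C : Finset (Fin n)}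

theorem IsSymmToeplitz.isSymm (hA : IsSymmToeplitz A) : A.IsSymm :=
  Matrix.IsSymm.ext fun i j => hA _ _ _ _ (by omega)

theorem IsSymmToeplitz.add_eq_add_of_consecutive (hA : IsSymmToeplitz A)
    (hC : ∀ v ∈ C, ∀ w, A v w ≠ 0 → w ∈ C) {a a' b b' : Fin n}
    (ha : a ∈ C) (ha' : a' ∈ C) (hb : b ∈ C) (hb' : b' ∈ C)
    (hab : a ≤ b) (haa' : a < a') (hbb' : b < b')
    (hsa : ∀ z ∈ C, a < z → a' ≤ z) (hsb : ∀ z ∈ C, b < z → b' ≤ z)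
    (hne : A a b ≠ 0 ∨ A a' b' ≠ 0) : (a : ℕ) + b' = a' + b := by
  have mem_of_lag : ∀ {x u v : Fin n}, x ∈ C → A u v ≠ 0 → ∀ (y : ℕ) (hy : y < n),
      (x : ℕ) + u = y + v ∨ (x : ℕ) + v = y + u → (⟨y, hy⟩ : Fin n) ∈ C :=
    fun {x u v} hx huv y hy h => hC _ hx _ (by rwa [hA x ⟨y, hy⟩ u v (by dsimp only; omega)])
  have ha'b' : a' ≤ b' := by
    rcases hab.lt_or_eq with hab | rfl
    · exact (hsa b hb hab).trans hbb'.le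
    · exact hsa _ hb' hbb'
  rcases hne with h | h
  · have h₁ : (a' : ℕ) ≤ a + b' - b := hsa _
      (mem_of_lag hb' h ((a : ℕ) + b' - b) (by omega) (by omega))
      (show (a : ℕ) < a + b' - b by omega)
    have h₂ : (b' : ℕ) ≤ a' + b - a := hsb _
      (mem_of_lag ha' h ((a' : ℕ) + b - a) (by omega) (by omega))
      (show (b : ℕ) < a' + b - a by omega)
    omega
  · have h₁ : (a : ℕ) + b' - a' ≤ b := not_lt.1 fun hlt => (hsb _
      (mem_of_lag ha h ((a : ℕ) + b' - a') (by omega) (by omega)) hlt).not_gt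
        (show (a : ℕ) + b' - a' < b' by omega)
    have h₂ : (b : ℕ) + a' - b' ≤ a := not_lt.1 fun hlt => (hsa _
      (mem_of_lag hb h ((b : ℕ) + a' - b') (by omega) (by omega)) hlt).not_gt
        (show (b : ℕ) + a' - b' < a' by omega)
    omega

theorem IsSymmToeplitz.submatrix_orderEmbOfFin (hA : IsSymmToeplitz A)
    (hC : ∀ v ∈ C, ∀ w, A v w ≠ 0 → w ∈ C) :
    IsSymmToeplitz (A.submatrix (C.orderEmbOfFin rfl) (C.orderEmbOfFin rfl)) := by
  set c := C.orderEmbOfFin rfl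
  have hstep : ∀ (p q : ℕ) (hp : p + 1 < #C) (hq : q + 1 < #C), p ≤ q →
      A (c ⟨p, by omega⟩) (c ⟨q, by omega⟩) = A (c ⟨p + 1, hp⟩) (c ⟨q + 1, hq⟩) := by
    intro p q hp hq hpq
    by_cases h0 :
        A (c ⟨p, by omega⟩) (c ⟨q, by omega⟩) = 0 ∧ A (c ⟨p + 1, hp⟩) (c ⟨q + 1, hq⟩) = 0
    · rw [h0.1, h0.2]
    have := hA.add_eq_add_of_consecutive hC (a := c ⟨p, by omega⟩) (a' := c ⟨p + 1, hp⟩)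
      (b := c ⟨q, by omega⟩) (b' := c ⟨q + 1, hq⟩) (orderEmbOfFin_mem C rfl _)
      (orderEmbOfFin_mem C rfl _) (orderEmbOfFin_mem C rfl _) (orderEmbOfFin_mem C rfl _)
      (c.le_iff_le.2 (Fin.mk_le_mk.2 hpq)) (c.lt_iff_lt.2 (Fin.mk_lt_mk.2 (by omega)))
      (c.lt_iff_lt.2 (Fin.mk_lt_mk.2 (by omega)))
      (fun z hz => C.orderEmbOfFin_succ_le hp hz) (fun z hz => C.orderEmbOfFin_succ_le hq hz)
      (not_and_or.1 h0)
    exact hA _ _ _ _ (by omega)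
  refine isSymmToeplitz_of_succ (hA.isSymm.submatrix c) fun p q hp hq => ?_
  rcases le_total p q with hpq | hqp
  · exact hstep p q hp hq hpq
  · simp only [Matrix.submatrix_apply]
    rw [hA.isSymm.apply, hA.isSymm.apply (c ⟨q + 1, hq⟩)]
    exact hstep q p hq hp hqp

theorem IsSymmToeplitz.exists_reachable_shift (hA : IsSymmToeplitz A) {x y : Fin n}
    (hyx : y ≤ x) (hx : ∀ v, A.Reachable x v → x ≤ v) {v : Fin n} (hv : A.Reachable x v) :
    ∃ w, A.Reachable y w ∧ (w : ℕ) + (x - y : ℕ) = v := by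
  induction hv with
  | refl => exact ⟨y, .refl y, by omega⟩
  | @tail b c hb hbc ih =>
    obtain ⟨w, hw, hwb⟩ := ih
    have hxc := hx c (Matrix.Reachable.tail hb hbc)
    refine ⟨⟨c - (x - y : ℕ), by omega⟩, hw.tail ?_, by dsimp only; omega⟩
    rwa [hA _ _ b c (by dsimp only; omega)]

theorem IsSymmToeplitz.exists_strictMono_submatrix (hA : IsSymmToeplitz A)
    {C D : Finset (Fin n)} (t : ℕ) (h : ∀ v ∈ C, ∃ w ∈ D, (w : ℕ) + t = v) :
    ∃ f : Fin #C → Fin #D, StrictMono f ∧ ∀ p q,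
      A.submatrix (C.orderEmbOfFin rfl) (C.orderEmbOfFin rfl) p q =
        A.submatrix (D.orderEmbOfFin rfl) (D.orderEmbOfFin rfl) (f p) (f q) := by
  choose g hgD hg using h
  have hg' : ∀ p, (g _ (orderEmbOfFin_mem C rfl p) : ℕ) + t = C.orderEmbOfFin rfl p :=
    fun p => hg _ _
  refine ⟨fun p => (D.orderIsoOfFin rfl).symm ⟨g _ (orderEmbOfFin_mem C rfl p), hgD _ _⟩,
    (D.orderIsoOfFin rfl).symm.strictMono.comp fun p q hpq => ?_, fun p q => ?_⟩
  · have := (C.orderEmbOfFin rfl).strictMono hpq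
    have := hg' p
    have := hg' q
    exact Subtype.mk_lt_mk.2 (by omega)
  · simp only [Matrix.submatrix_apply]
    rw [← coe_orderIsoOfFin_apply D, ← coe_orderIsoOfFin_apply D, OrderIso.apply_symm_apply,
      OrderIso.apply_symm_apply]
    dsimp only
    exact hA _ _ _ _ (by have := hg' p; have := hg' q; omega)

end Toeplitz

/-- The Frobenius normal form of a symmetric Toeplitz matrix: for every symmetric Toeplitz
`A` there are a permutation of indices and irreducible symmetric Toeplitz blocks
`A₁, ..., A_k` with `PᵀAP = diag(A₁,...,A_k)` and `Aᵢ` a principal submatrix of `Aⱼ`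
whenever `i ≤ j`. -/
theorem stmt_5 (n : ℕ) (A : Matrix (Fin n) (Fin n) ℝ) (hA : IsSymmToeplitz A) :
    ∃ (k : ℕ) (_ : 0 < k) (d : Fin k → ℕ)
      (blocks : ∀ i : Fin k, Matrix (Fin (d i)) (Fin (d i)) ℝ)
      (e : (Σ i : Fin k, Fin (d i)) ≃ Fin n),
      (∀ x y : Σ i : Fin k, Fin (d i), A (e x) (e y) = Matrix.blockDiagonal' blocks x y) ∧
      (∀ i, IsSymmToeplitz (blocks i)) ∧
      (∀ i, MatIrreducible (blocks i)) ∧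
      (∀ i j : Fin k, i ≤ j → ∃ f : Fin (d i) → Fin (d j),
        StrictMono f ∧ ∀ p q : Fin (d i), blocks i p q = blocks j (f p) (f q)) := by
  rcases Nat.eq_zero_or_pos n with rfl | hn
  · exact ⟨1, one_pos, fun _ => 0, fun _ => 0,
      ⟨fun x => x.2.elim0, Fin.elim0, fun x => x.2.elim0, fun v => v.elim0⟩, fun x => x.2.elim0,
      fun _ p => p.elim0, fun _ ⟨_, r, _, hr, _⟩ => r.not_lt_zero hr,
      fun _ _ _ => ⟨id, strictMono_id, fun p => p.elim0⟩⟩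
  have := Fin.pos_iff_nonempty.1 hn
  have hsymm := hA.isSymm
  let C i : Finset (Fin n) := {v | A.componentIndex v = i}
  have hmem {i v} : v ∈ C i ↔ A.Reachable (A.componentRoot i) v := by
    simp [C, Matrix.componentIndex_eq_iff hsymm]
  have hclosed i : ∀ v ∈ C i, ∀ w, A v w ≠ 0 → w ∈ C i :=
    fun v hv w hvw => hmem.2 ((hmem.1 hv).tail hvw)
  refine ⟨_, Matrix.card_componentMins_pos, fun i => #(C i),
    fun i => A.submatrix ((C i).orderEmbOfFin rfl) ((C i).orderEmbOfFin rfl),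
    Matrix.sigmaFiberOrderEquiv A.componentIndex,
    congr_fun₂ (Matrix.submatrix_sigmaFiberOrderEquiv fun _ _ =>
      Matrix.componentIndex_eq_of_ne_zero hsymm),
    fun i => hA.submatrix_orderEmbOfFin (hclosed i), fun i => ?_, fun i j hij => ?_⟩
  · refine matIrreducible_of_reachable fun p q =>
      Matrix.reachable_submatrix (orderEmbOfFin _ rfl).injective (by simpa using hclosed i) ?_
    exact ((hmem.1 (orderEmbOfFin_mem _ rfl p)).symm hsymm).trans
      (hmem.1 (orderEmbOfFin_mem _ rfl q))
  · refine hA.exists_strictMono_submatrix (A.componentRoot i - A.componentRoot j : ℕ)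
      fun v hv => ?_
    obtain ⟨w, hw, hwv⟩ := hA.exists_reachable_shift (Matrix.componentRoot_antitone hij)
      (fun v => Matrix.componentRoot_le) (hmem.1 hv)
    exact ⟨w, hmem.2 hw, hwv⟩
end

section
/- Let A = H[a_0,...,a_{2n-2}] be an n×n Hankel matrix with T_A = {i : a_i ≠ 0}, and let G(A) be its weighted Hankel graph on vertex set {0,...,n-1} where i ~ j iff i + j ∈ T_A. Suppose u_1, u_2, v_1, v_2 are vertices in the same connected component C of G(A) with u_1 + v_1 = u_2 + v_2 ∈ T_A and v_2 ≤ v_1 ≤ u_1 ≤ u_2. Then |V(C) ∩ [u_1, u_2]| = |V(C) ∩ [v_2, v_1]|, where [a,b] denotes the set of integers between a and b. -/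
/-- Adjacency in the weighted Hankel graph `G(A)` of the Hankel matrix
`A = H[a 0, ..., a (2n-2)]`: vertices are the integers `0, ..., n-1`, and `u ~ v` iff
`u + v ∈ T_A = {t : a t ≠ 0}` (loops allowed). -/
def HAdj (n : ℕ) (a : ℕ → ℝ) (u v : ℤ) : Prop :=
  0 ≤ u ∧ u ≤ (n : ℤ) - 1 ∧ 0 ≤ v ∧ v ≤ (n : ℤ) - 1 ∧ a (u + v).toNat ≠ 0

/-- `HReach n a u v` : `u` and `v` lie in the same connected component of `G(A)`. -/
def HReach (n : ℕ) (a : ℕ → ℝ) : ℤ → ℤ → Prop :=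
  Relation.ReflTransGen (HAdj n a)

/-- If `u₁, u₂, v₁, v₂` lie in one component `C` of the weighted Hankel graph `G(A)` with
`u₁ + v₁ = u₂ + v₂ = t ∈ T_A` and `v₂ ≤ v₁ ≤ u₁ ≤ u₂`, then
`|V(C) ∩ [u₁,u₂]| = |V(C) ∩ [v₂,v₁]|`. -/
theorem stmt_7 (n : ℕ) (a : ℕ → ℝ) (t : ℕ) (ht : a t ≠ 0)
    (u₁ u₂ v₁ v₂ : ℤ)
    (hu₁ : 0 ≤ u₁ ∧ u₁ ≤ (n : ℤ) - 1) (hu₂ : 0 ≤ u₂ ∧ u₂ ≤ (n : ℤ) - 1)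
    (hv₁ : 0 ≤ v₁ ∧ v₁ ≤ (n : ℤ) - 1) (hv₂ : 0 ≤ v₂ ∧ v₂ ≤ (n : ℤ) - 1)
    (hsum₁ : u₁ + v₁ = t) (hsum₂ : u₂ + v₂ = t)
    (hord : v₂ ≤ v₁ ∧ v₁ ≤ u₁ ∧ u₁ ≤ u₂)
    (r₂ : HReach n a u₁ u₂) (r₃ : HReach n a u₁ v₁) (r₄ : HReach n a u₁ v₂) :
    ({x : ℤ | HReach n a u₁ x} ∩ Set.Icc u₁ u₂).ncard
      = ({x : ℤ | HReach n a u₁ x} ∩ Set.Icc v₂ v₁).ncard := by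
  obtain ⟨h21, h11, h12⟩ := hord
  -- helper: if x is reachable and both x and t - x are valid vertices, t - x is reachable
  have key : ∀ x : ℤ, 0 ≤ x → x ≤ (n : ℤ) - 1 → 0 ≤ (t : ℤ) - x →
      (t : ℤ) - x ≤ (n : ℤ) - 1 → HReach n a u₁ x → HReach n a u₁ ((t : ℤ) - x) := by
    intro x hx0 hx1 hy0 hy1 hx
    refine hx.tail ?_
    refine ⟨hx0, hx1, hy0, hy1, ?_⟩
    have : (x + ((t : ℤ) - x)).toNat = t := by
      simp
    rw [this]; exact ht
  have hinj : Function.Injective (fun x : ℤ => (t : ℤ) - x) := by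
    intro x y h; simpa using h
  have himg : (fun x : ℤ => (t : ℤ) - x) '' ({x : ℤ | HReach n a u₁ x} ∩ Set.Icc u₁ u₂)
      = ({x : ℤ | HReach n a u₁ x} ∩ Set.Icc v₂ v₁) := by
    ext y
    constructor
    · rintro ⟨x, ⟨hxr, hx1, hx2⟩, rfl⟩
      refine ⟨key x (le_trans hu₁.1 hx1) (le_trans hx2 hu₂.2) (by omega) (by omega) hxr,
        show v₂ ≤ (t : ℤ) - x by omega, show (t : ℤ) - x ≤ v₁ by omega⟩
    · rintro ⟨hyr, hy1, hy2⟩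
      refine ⟨(t : ℤ) - y, ⟨key y (le_trans hv₂.1 hy1) (le_trans hy2 hv₁.2)
        (by omega) (by omega) hyr, by omega, by omega⟩, by ring⟩
  calc ({x : ℤ | HReach n a u₁ x} ∩ Set.Icc u₁ u₂).ncard
      = ((fun x : ℤ => (t : ℤ) - x) '' ({x : ℤ | HReach n a u₁ x} ∩ Set.Icc u₁ u₂)).ncard :=
        (Set.ncard_image_of_injective _ hinj).symm
    _ = _ := by rw [himg]
end

section
/- Every connected component of a weighted Hankel graph is isomorphic, as an edge-weighted graph, to a weighted Hankel graph under the normalized labeling of its vertex set. Precisely: if C is a component of G(A) for an n×n Hankel matrix A, with |V(C)| = k, then the order-preserving bijection ψ : V(C) → {0,...,k-1} is a weighted graph isomorphism from C onto G(B) for some k×k Hankel matrix B. -/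
lemma hankel_key (n : ℕ) (a : ℕ → ℝ) (w : ℤ) (hw : 0 ≤ w ∧ w ≤ (n : ℤ) - 1)
    (C : Set ℤ) (hC : C = {x : ℤ | HReach n a w x}) (k : ℕ)
    (ψ : ℤ → ℤ) (hbij : Set.BijOn ψ C (Set.Icc 0 ((k : ℤ) - 1)))
    (hmono : ∀ u ∈ C, ∀ v ∈ C, u < v → ψ u < ψ v)
    {u v u' v' : ℤ} (hu : u ∈ C) (hv : v ∈ C) (hu' : u' ∈ C) (hv' : v' ∈ C)
    (hadj : HAdj n a u v) (hsum : ψ u + ψ v = ψ u' + ψ v') :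
    u' + v' = u + v ∧ HAdj n a u' v' := by
  set N : ℤ := (n : ℤ) - 1 with hN
  have hbound : ∀ x ∈ C, 0 ≤ x ∧ x ≤ N := by
    intro x hx
    rw [hC] at hx
    induction hx with
    | refl => exact hw
    | tail _ hyz _ => exact ⟨hyz.2.2.1, hyz.2.2.2.1⟩
  have hclosed : ∀ x ∈ C, ∀ y, HAdj n a x y → y ∈ C := by
    intro x hx y h
    rw [hC] at hx ⊢
    exact Relation.ReflTransGen.tail hx h
  have hmono' : ∀ x ∈ C, ∀ y ∈ C, x ≤ y → ψ x ≤ ψ y := by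
    intro x hx y hy hxy
    rcases eq_or_lt_of_le hxy with h | h
    · exact le_of_eq (by rw [h])
    · exact (hmono x hx y hy h).le
  have hlt : ∀ x ∈ C, ∀ y ∈ C, ψ x < ψ y → x < y := by
    intro x hx y hy h
    by_contra hcon
    push_neg at hcon
    exact absurd (hmono' y hy x hx hcon) (by omega)
  have hinj := hbij.injOn
  obtain ⟨hu0, huN, hv0, hvN, ha⟩ := hadj
  set t : ℤ := u + v with ht
  set S : Set ℤ := {x | x ∈ C ∧ t - N ≤ x ∧ 0 ≤ x ∧ x ≤ t ∧ x ≤ N} with hS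
  have hrefl : ∀ x ∈ S, (t - x ∈ S ∧ HAdj n a x (t - x)) := by
    rintro x ⟨hxC, hb1, hb2, hb3, hb4⟩
    have hadj' : HAdj n a x (t - x) :=
      ⟨hb2, hb4, by omega, by omega, by rw [show x + (t - x) = u + v by omega]; exact ha⟩
    exact ⟨⟨hclosed x hxC _ hadj', by omega, by omega, by omega, by omega⟩, hadj'⟩
  have hSfin : S.Finite := by
    apply (Set.finite_Icc (0 : ℤ) N).subset
    rintro x ⟨_, _, h2, _, h4⟩
    exact Set.mem_Icc.mpr ⟨h2, h4⟩
  have huS : u ∈ S := ⟨hu, by omega, by omega, by omega, by omega⟩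
  have hvS : v ∈ S := ⟨hv, by omega, by omega, by omega, by omega⟩
  obtain ⟨x1, hx1S, hx1min⟩ := Set.exists_min_image S id hSfin ⟨u, huS⟩
  obtain ⟨x2, hx2S, hx2max⟩ := Set.exists_max_image S id hSfin ⟨u, huS⟩
  simp only [id] at hx1min hx2max
  have icc_ncard : ∀ p q : ℤ, (Set.Icc p q).ncard = (q + 1 - p).toNat := by
    intro p q
    rw [← Finset.coe_Icc, Set.ncard_coe_finset, Int.card_Icc]
  -- the key constant-sum property of the reflection on S
  have hkey : ∀ x ∈ S, ψ x + ψ (t - x) = ψ x1 + ψ x2 := by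
    intro x hxS
    obtain ⟨hzS, -⟩ := hrefl x hxS
    set z : ℤ := t - x with hz
    have himg1 : ψ '' (S ∩ Set.Iio x) = Set.Icc (ψ x1) (ψ x - 1) := by
      ext j
      constructor
      · rintro ⟨y, ⟨hyS, hylt⟩, rfl⟩
        have h1 : ψ x1 ≤ ψ y := hmono' x1 hx1S.1 y hyS.1 (hx1min y hyS)
        have h2 : ψ y < ψ x := hmono y hyS.1 x hxS.1 hylt
        exact Set.mem_Icc.mpr ⟨h1, by omega⟩
      · intro hj
        rw [Set.mem_Icc] at hj
        have hx1b := Set.mem_Icc.mp (hbij.mapsTo hx1S.1)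
        have hxb := Set.mem_Icc.mp (hbij.mapsTo hxS.1)
        obtain ⟨y, hyC, hyj⟩ := hbij.surjOn (Set.mem_Icc.mpr ⟨by omega, by omega⟩ :
          j ∈ Set.Icc 0 ((k : ℤ) - 1))
        have hyx : y < x := hlt y hyC x hxS.1 (by omega)
        have hx1y : x1 ≤ y :=
          le_of_not_gt fun h => absurd (hmono y hyC x1 hx1S.1 h) (by omega)
        have hyS : y ∈ S := by
          obtain ⟨-, e1, e2, e3, e4⟩ := hx1S
          obtain ⟨-, f1, f2, f3, f4⟩ := hxS
          exact ⟨hyC, by omega, by omega, by omega, by omega⟩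
        exact ⟨y, ⟨hyS, hyx⟩, hyj⟩
    have himg2 : ψ '' (S ∩ Set.Ioi z) = Set.Icc (ψ z + 1) (ψ x2) := by
      ext j
      constructor
      · rintro ⟨y, ⟨hyS, hygt⟩, rfl⟩
        have h1 : ψ y ≤ ψ x2 := hmono' y hyS.1 x2 hx2S.1 (hx2max y hyS)
        have h2 : ψ z < ψ y := hmono z hzS.1 y hyS.1 hygt
        exact Set.mem_Icc.mpr ⟨by omega, h1⟩
      · intro hj
        rw [Set.mem_Icc] at hj
        have hx2b := Set.mem_Icc.mp (hbij.mapsTo hx2S.1)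
        have hzb := Set.mem_Icc.mp (hbij.mapsTo hzS.1)
        obtain ⟨y, hyC, hyj⟩ := hbij.surjOn (Set.mem_Icc.mpr ⟨by omega, by omega⟩ :
          j ∈ Set.Icc 0 ((k : ℤ) - 1))
        have hyz : z < y := hlt z hzS.1 y hyC (by omega)
        have hyx2 : y ≤ x2 :=
          le_of_not_gt fun h => absurd (hmono x2 hx2S.1 y hyC h) (by omega)
        have hyS : y ∈ S := by
          obtain ⟨-, e1, e2, e3, e4⟩ := hx2S
          obtain ⟨-, f1, f2, f3, f4⟩ := hzS
          exact ⟨hyC, by omega, by omega, by omega, by omega⟩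
        exact ⟨y, ⟨hyS, hyz⟩, hyj⟩
    have himg3 : (fun y => t - y) '' (S ∩ Set.Iio x) = S ∩ Set.Ioi z := by
      ext y
      simp only [Set.mem_image, Set.mem_inter_iff, Set.mem_Iio, Set.mem_Ioi]
      constructor
      · rintro ⟨y', ⟨hy'S, hy'lt⟩, rfl⟩
        exact ⟨(hrefl y' hy'S).1, by omega⟩
      · rintro ⟨hyS, hygt⟩
        have h1 := (hrefl y hyS).1
        have h2 : x ≤ t := hxS.2.2.2.1
        refine ⟨t - y, ⟨h1, by omega⟩, by omega⟩
    have hinj1 : Set.InjOn ψ (S ∩ Set.Iio x) := hinj.mono fun y hy => hy.1.1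
    have hinj2 : Set.InjOn ψ (S ∩ Set.Ioi z) := hinj.mono fun y hy => hy.1.1
    have hinj3 : Set.InjOn (fun y => t - y) (S ∩ Set.Iio x) := by
      intro p _ q _ h
      simp only at h
      omega
    have e1 : (Set.Icc (ψ x1) (ψ x - 1)).ncard = (S ∩ Set.Iio x).ncard := by
      rw [← himg1, Set.ncard_image_of_injOn hinj1]
    have e2 : (Set.Icc (ψ z + 1) (ψ x2)).ncard = (S ∩ Set.Ioi z).ncard := by
      rw [← himg2, Set.ncard_image_of_injOn hinj2]
    have e3 : (S ∩ Set.Iio x).ncard = (S ∩ Set.Ioi z).ncard := by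
      rw [← himg3, Set.ncard_image_of_injOn hinj3]
    have g1 : ψ x1 ≤ ψ x := hmono' x1 hx1S.1 x hxS.1 (hx1min x hxS)
    have g2 : ψ z ≤ ψ x2 := hmono' z hzS.1 x2 hx2S.1 (hx2max z hzS)
    rw [icc_ncard] at e1
    rw [icc_ncard] at e2
    omega
  have hceq : ψ u + ψ v = ψ x1 + ψ x2 := by
    have h := hkey u huS
    rw [show t - u = v by omega] at h
    exact h
  -- show u' lies in the window S
  obtain ⟨hu'0, hu'N⟩ := hbound u' hu'
  obtain ⟨hv'0, hv'N⟩ := hbound v' hv'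
  have hnotS : ∀ y ∈ C, y ∉ S → (y < t - N ∨ t < y) := by
    intro y hyC hyS
    obtain ⟨h0, hN'⟩ := hbound y hyC
    by_contra hcon
    push_neg at hcon
    exact hyS ⟨hyC, by omega, by omega, by omega, by omega⟩
  have hu'S : u' ∈ S := by
    by_contra hns
    obtain ⟨e1, e2, e3, e4⟩ : t - N ≤ x1 ∧ 0 ≤ x1 ∧ x1 ≤ t ∧ x1 ≤ N := hx1S.2
    obtain ⟨f1, f2, f3, f4⟩ : t - N ≤ x2 ∧ 0 ≤ x2 ∧ x2 ≤ t ∧ x2 ≤ N := hx2S.2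
    rcases hnotS u' hu' hns with hcase | hcase
    · -- u' < t - N, so t > N
      have h1 : ψ u' < ψ x1 := hmono u' hu' x1 hx1S.1 (by omega)
      have h2 : ψ x2 < ψ v' := by omega
      have h3 : x2 < v' := hlt x2 hx2S.1 v' hv' h2
      have h4 : v' ∉ S := fun hvs => absurd (hx2max v' hvs) (by omega)
      rcases hnotS v' hv' h4 with h5 | h5 <;> omega
    · -- t < u'
      have h1 : ψ x2 < ψ u' := hmono x2 hx2S.1 u' hu' (by omega)
      have h2 : ψ v' < ψ x1 := by omega
      have h3 : v' < x1 := hlt v' hv' x1 hx1S.1 h2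
      have h4 : v' ∉ S := fun hvs => absurd (hx1min v' hvs) (by omega)
      rcases hnotS v' hv' h4 with h5 | h5 <;> omega
  obtain ⟨htu'S, htu'adj⟩ := hrefl u' hu'S
  have h6 : ψ (t - u') = ψ v' := by
    have h := hkey u' hu'S
    omega
  have h7 : t - u' = v' := hinj htu'S.1 hv' h6
  refine ⟨by omega, ?_⟩
  rw [← h7]
  exact htu'adj

/-- Each component of a weighted Hankel graph is isomorphic, under its normalized
labeling `ψ : V(C) → {0,...,k-1}`, to a weighted Hankel graph `G(B)` for some
Hankel matrix `B = H[b 0, ..., b (2k-2)]` of order `k`. -/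
theorem stmt_9 (n : ℕ) (a : ℕ → ℝ) (w : ℤ) (hw : 0 ≤ w ∧ w ≤ (n : ℤ) - 1)
    (C : Set ℤ) (hC : C = {x : ℤ | HReach n a w x})
    (k : ℕ) (hk : k = C.ncard)
    (ψ : ℤ → ℤ) (hbij : Set.BijOn ψ C (Set.Icc 0 ((k : ℤ) - 1)))
    (hmono : ∀ u ∈ C, ∀ v ∈ C, u < v → ψ u < ψ v) :
    ∃ b : ℕ → ℝ, ∀ u ∈ C, ∀ v ∈ C,
      (HAdj n a u v ↔ HAdj k b (ψ u) (ψ v)) ∧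
      (HAdj n a u v → a (u + v).toNat = b (ψ u + ψ v).toNat) := by
  classical
  set b : ℕ → ℝ := fun s =>
    if h : ∃ p : ℤ × ℤ, p.1 ∈ C ∧ p.2 ∈ C ∧ HAdj n a p.1 p.2 ∧ ψ p.1 + ψ p.2 = (s : ℤ) then
      a ((h.choose.1 + h.choose.2).toNat)
    else 0 with hbdef
  refine ⟨b, ?_⟩
  intro u hu v hv
  obtain ⟨hψu0, hψuk⟩ := Set.mem_Icc.mp (hbij.mapsTo hu)
  obtain ⟨hψv0, hψvk⟩ := Set.mem_Icc.mp (hbij.mapsTo hv)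
  have hs : (((ψ u + ψ v).toNat : ℕ) : ℤ) = ψ u + ψ v := Int.toNat_of_nonneg (by omega)
  have hbv : HAdj n a u v → b ((ψ u + ψ v).toNat) = a (u + v).toNat := by
    intro hadj
    have hPs : ∃ p : ℤ × ℤ, p.1 ∈ C ∧ p.2 ∈ C ∧ HAdj n a p.1 p.2 ∧
        ψ p.1 + ψ p.2 = (((ψ u + ψ v).toNat : ℕ) : ℤ) := ⟨(u, v), hu, hv, hadj, by rw [hs]⟩
    obtain ⟨p1C, p2C, padj, psum⟩ := hPs.choose_spec
    have hk' := hankel_key n a w hw C hC k ψ hbij hmono hu hv p1C p2C hadj (by omega)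
    simp only [hbdef]
    rw [dif_pos hPs, hk'.1]
  constructor
  · constructor
    · intro hadj
      exact ⟨hψu0, hψuk, hψv0, hψvk, by rw [hbv hadj]; exact hadj.2.2.2.2⟩
    · intro hBadj
      have hb0 : b ((ψ u + ψ v).toNat) ≠ 0 := hBadj.2.2.2.2
      by_cases hPs : ∃ p : ℤ × ℤ, p.1 ∈ C ∧ p.2 ∈ C ∧ HAdj n a p.1 p.2 ∧
          ψ p.1 + ψ p.2 = (((ψ u + ψ v).toNat : ℕ) : ℤ)
      · obtain ⟨p1C, p2C, padj, psum⟩ := hPs.choose_spec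
        exact (hankel_key n a w hw C hC k ψ hbij hmono p1C p2C hu hv padj (by omega)).2
      · exfalso
        apply hb0
        simp only [hbdef]
        rw [dif_neg hPs]
  · intro hadj
    exact (hbv hadj).symm
end

section
/- In the setting of a symmetric Toeplitz matrix A and a component C of G(A) with normalized labeling ψ : V(C) → {1,...,t}, define D = {s ∈ S_A : ∃ u,v ∈ V(C), u - v = s}. Then the map φ : D → ℤ given by φ(s) = ψ(v+s) - ψ(v), for any v ∈ V(C) with v + s ∈ V(C), is well-defined (independent of the choice of v) and injective. -/
/-- With `ψ` the normalized labeling of a component `C` of `G(A)` and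
`D = {s ∈ S_A : ∃ u v ∈ V(C), u - v = s}`, the map `φ : D → ℤ`,
`φ(s) = ψ(v+s) - ψ(v)` (for any `v ∈ V(C)` with `v + s ∈ V(C)`),
is well defined and injective. -/
theorem stmt_10 (n : ℕ) (a : ℕ → ℝ) (w : ℤ) (hw : 1 ≤ w ∧ w ≤ n)
    (C : Set ℤ) (hC : C = {x : ℤ | TReach n a w x})
    (t : ℕ) (ht : t = C.ncard)
    (ψ : ℤ → ℤ) (hbij : Set.BijOn ψ C (Set.Icc 1 (t : ℤ)))
    (hmono : ∀ u ∈ C, ∀ v ∈ C, u < v → ψ u < ψ v) :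
    (∀ s : ℕ, a s ≠ 0 → ∀ v₁ ∈ C, ∀ v₂ ∈ C, v₁ + (s : ℤ) ∈ C → v₂ + (s : ℤ) ∈ C →
      ψ (v₁ + (s : ℤ)) - ψ v₁ = ψ (v₂ + (s : ℤ)) - ψ v₂) ∧
    (∀ s₁ s₂ : ℕ, a s₁ ≠ 0 → a s₂ ≠ 0 →
      ∀ v₁ ∈ C, ∀ v₂ ∈ C, v₁ + (s₁ : ℤ) ∈ C → v₂ + (s₂ : ℤ) ∈ C →
        ψ (v₁ + (s₁ : ℤ)) - ψ v₁ = ψ (v₂ + (s₂ : ℤ)) - ψ v₂ → s₁ = s₂) := by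
  -- bounds of elements of C
  have hbound : ∀ x ∈ C, 1 ≤ x ∧ x ≤ (n : ℤ) := by
    intro x hx
    rw [hC] at hx
    rcases Relation.ReflTransGen.cases_tail hx with h | ⟨c, _, hadj⟩
    · exact h ▸ hw
    · exact ⟨hadj.2.2.1, hadj.2.2.2.1⟩
  -- C is closed under adding s when in range
  have hstep : ∀ (s : ℕ), a s ≠ 0 → ∀ x ∈ C, 1 ≤ x + (s : ℤ) → x + (s : ℤ) ≤ n →
      x + (s : ℤ) ∈ C := by
    intro s hs x hx h1 h2
    obtain ⟨hx1, hx2⟩ := hbound x hx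
    rw [hC] at hx ⊢
    refine Relation.ReflTransGen.tail hx ⟨hx1, hx2, h1, h2, ?_⟩
    have : (x - (x + (s : ℤ))).natAbs = s := by
      simp [show x - (x + (s : ℤ)) = -(s : ℤ) by ring]
    rwa [this]
  -- C is closed under subtracting s when in range
  have hstep' : ∀ (s : ℕ), a s ≠ 0 → ∀ x ∈ C, 1 ≤ x - (s : ℤ) → x - (s : ℤ) ∈ C := by
    intro s hs x hx h1
    obtain ⟨hx1, hx2⟩ := hbound x hx
    rw [hC] at hx ⊢
    refine Relation.ReflTransGen.tail hx ⟨hx1, hx2, h1, by linarith, ?_⟩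
    have : (x - (x - (s : ℤ))).natAbs = s := by
      simp [show x - (x - (s : ℤ)) = (s : ℤ) by ring]
    rwa [this]
  -- counting lemma
  have hcount : ∀ u ∈ C, ∀ v ∈ C, v ≤ u →
      ψ u - ψ v = ((C ∩ Set.Ico v u).ncard : ℤ) := by
    intro u hu v hv hvu
    have hψvu : ψ v ≤ ψ u := by
      rcases eq_or_lt_of_le hvu with h | h
      · rw [h]
      · exact le_of_lt (hmono v hv u hu h)
    have hbij2 : Set.BijOn ψ (C ∩ Set.Ico v u) (Set.Icc (ψ v) (ψ u - 1)) := by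
      refine ⟨?_, hbij.injOn.mono Set.inter_subset_left, ?_⟩
      · rintro x ⟨hxC, hx1, hx2⟩
        refine ⟨?_, ?_⟩
        · rcases eq_or_lt_of_le hx1 with h | h
          · rw [← h]
          · exact le_of_lt (hmono v hv x hxC h)
        · have := hmono x hxC u hu hx2
          omega
      · intro y hy
        obtain ⟨hy1, hy2⟩ := hy
        have hyIcc : y ∈ Set.Icc (1 : ℤ) (t : ℤ) := by
          have h1 := hbij.mapsTo hv
          have h2 := hbij.mapsTo hu
          simp only [Set.mem_Icc] at h1 h2 ⊢
          omega
        obtain ⟨x, hxC, hxy⟩ := hbij.surjOn hyIcc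
        refine ⟨x, ⟨hxC, ?_, ?_⟩, hxy⟩
        · by_contra h
          push_neg at h
          have := hmono x hxC v hv h
          omega
        · by_contra h
          push_neg at h
          rcases eq_or_lt_of_le h with h' | h'
          · subst h'; omega
          · have := hmono u hu x hxC h'
            omega
    have h1 : (C ∩ Set.Ico v u).ncard = (Set.Icc (ψ v) (ψ u - 1)).ncard := by
      rw [← hbij2.image_eq, Set.ncard_image_of_injOn hbij2.injOn]
    have h2 : (Set.Icc (ψ v) (ψ u - 1)).ncard = (ψ u - ψ v).toNat := by
      rw [← Finset.coe_Icc, Set.ncard_coe_finset, Int.card_Icc]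
      congr 1
      ring
    rw [h1, h2]
    omega
  -- part 1 helper, assuming v₁ ≤ v₂
  have key : ∀ s : ℕ, a s ≠ 0 → ∀ v₁ ∈ C, ∀ v₂ ∈ C, v₁ + (s : ℤ) ∈ C →
      v₂ + (s : ℤ) ∈ C → v₁ ≤ v₂ →
      ψ (v₁ + (s : ℤ)) - ψ v₁ = ψ (v₂ + (s : ℤ)) - ψ v₂ := by
    intro s hs v₁ hv₁ v₂ hv₂ h₁ h₂ hle
    obtain ⟨hb1, hb2⟩ := hbound (v₂ + (s : ℤ)) h₂
    -- shift bijection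
    have hshift : Set.BijOn (· + (s : ℤ)) (C ∩ Set.Ico v₁ v₂)
        (C ∩ Set.Ico (v₁ + (s : ℤ)) (v₂ + (s : ℤ))) := by
      refine ⟨?_, fun x _ y _ h => by simpa using h, ?_⟩
      · rintro x ⟨hxC, hx1, hx2⟩
        obtain ⟨hc1, hc2⟩ := hbound x hxC
        dsimp only
        refine ⟨hstep s hs x hxC (by omega) (by omega), by omega, by omega⟩
      · rintro y ⟨hyC, hy1, hy2⟩
        obtain ⟨hc1, hc2⟩ := hbound v₁ hv₁
        refine ⟨y - (s : ℤ), ⟨hstep' s hs y hyC (by omega), by omega, by omega⟩, by dsimp only; ring⟩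
    have hnc : (C ∩ Set.Ico v₁ v₂).ncard =
        (C ∩ Set.Ico (v₁ + (s : ℤ)) (v₂ + (s : ℤ))).ncard := by
      rw [← hshift.image_eq, Set.ncard_image_of_injOn hshift.injOn]
    have e1 := hcount v₂ hv₂ v₁ hv₁ hle
    have e2 := hcount (v₂ + (s : ℤ)) h₂ (v₁ + (s : ℤ)) h₁ (by omega)
    rw [hnc] at e1
    omega
  have part1 : ∀ s : ℕ, a s ≠ 0 → ∀ v₁ ∈ C, ∀ v₂ ∈ C, v₁ + (s : ℤ) ∈ C →
      v₂ + (s : ℤ) ∈ C → ψ (v₁ + (s : ℤ)) - ψ v₁ = ψ (v₂ + (s : ℤ)) - ψ v₂ := by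
    intro s hs v₁ hv₁ v₂ hv₂ h₁ h₂
    rcases le_total v₁ v₂ with h | h
    · exact key s hs v₁ hv₁ v₂ hv₂ h₁ h₂ h
    · exact (key s hs v₂ hv₂ v₁ hv₁ h₂ h₁ h).symm
  refine ⟨part1, ?_⟩
  -- injectivity helper assuming s₁ ≤ s₂
  have key2 : ∀ s₁ s₂ : ℕ, a s₁ ≠ 0 → a s₂ ≠ 0 →
      ∀ v₁ ∈ C, ∀ v₂ ∈ C, v₁ + (s₁ : ℤ) ∈ C → v₂ + (s₂ : ℤ) ∈ C → s₁ ≤ s₂ →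
        ψ (v₁ + (s₁ : ℤ)) - ψ v₁ = ψ (v₂ + (s₂ : ℤ)) - ψ v₂ → s₁ = s₂ := by
    intro s₁ s₂ hs₁ hs₂ v₁ hv₁ v₂ hv₂ h₁ h₂ hle heq
    obtain ⟨hb1, hb2⟩ := hbound v₂ hv₂
    obtain ⟨hb3, hb4⟩ := hbound (v₂ + (s₂ : ℤ)) h₂
    have h₃ : v₂ + (s₁ : ℤ) ∈ C := hstep s₁ hs₁ v₂ hv₂ (by omega) (by omega)
    have e := part1 s₁ hs₁ v₁ hv₁ v₂ hv₂ h₁ h₃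
    have : ψ (v₂ + (s₁ : ℤ)) = ψ (v₂ + (s₂ : ℤ)) := by omega
    have := hbij.injOn h₃ h₂ this
    omega
  intro s₁ s₂ hs₁ hs₂ v₁ hv₁ v₂ hv₂ h₁ h₂ heq
  rcases le_total s₁ s₂ with h | h
  · exact key2 s₁ s₂ hs₁ hs₂ v₁ hv₁ v₂ hv₂ h₁ h₂ h heq
  · exact (key2 s₂ s₁ hs₂ hs₁ v₂ hv₂ v₁ hv₁ h₂ h₁ h heq.symm).symm
end

section
/- In the setting of an n×n Hankel matrix A and a component C of G(A) with normalized labeling ψ : V(C) → {0,...,k-1}, define S = {t ∈ T_A : ∃ u,v ∈ V(C), u + v = t}. Then the map φ : S → ℕ given by φ(t) = ψ(v) + ψ(t-v), for any vertex v ∈ V(C) with t - v ∈ V(C), is well-defined (independent of the choice of v) and injective. -/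
/-- With `ψ` the normalized labeling of a component `C` of a weighted Hankel graph and
`S = {t ∈ T_A : ∃ u v ∈ V(C), u + v = t}`, the map `φ : S → ℕ`,
`φ(t) = ψ(v) + ψ(t - v)` (for any `v ∈ V(C)` with `t - v ∈ V(C)`),
is well defined and injective. -/
theorem stmt_11 (n : ℕ) (a : ℕ → ℝ) (w : ℤ) (hw : 0 ≤ w ∧ w ≤ (n : ℤ) - 1)
    (C : Set ℤ) (hC : C = {x : ℤ | HReach n a w x})
    (k : ℕ) (hk : k = C.ncard)
    (ψ : ℤ → ℤ) (hbij : Set.BijOn ψ C (Set.Icc 0 ((k : ℤ) - 1)))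
    (hmono : ∀ u ∈ C, ∀ v ∈ C, u < v → ψ u < ψ v) :
    (∀ t : ℕ, a t ≠ 0 → ∀ v₁ ∈ C, ∀ v₂ ∈ C, (t : ℤ) - v₁ ∈ C → (t : ℤ) - v₂ ∈ C →
      ψ v₁ + ψ ((t : ℤ) - v₁) = ψ v₂ + ψ ((t : ℤ) - v₂)) ∧
    (∀ t₁ t₂ : ℕ, a t₁ ≠ 0 → a t₂ ≠ 0 →
      ∀ v₁ ∈ C, ∀ v₂ ∈ C, (t₁ : ℤ) - v₁ ∈ C → (t₂ : ℤ) - v₂ ∈ C →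
        ψ v₁ + ψ ((t₁ : ℤ) - v₁) = ψ v₂ + ψ ((t₂ : ℤ) - v₂) → t₁ = t₂) := by
  obtain ⟨hw0, hw1⟩ := hw
  have hbound : ∀ x ∈ C, 0 ≤ x ∧ x ≤ (n : ℤ) - 1 := by
    intro x hx
    rw [hC] at hx
    induction hx with
    | refl => exact ⟨hw0, hw1⟩
    | tail _ h _ => exact ⟨h.2.2.1, h.2.2.2.1⟩
  have hfin : C.Finite :=
    Set.Finite.subset (Set.finite_Icc 0 ((n : ℤ) - 1))
      (fun x hx => Set.mem_Icc.2 (hbound x hx))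
  have hclose : ∀ (t : ℕ), a t ≠ 0 → ∀ x ∈ C, 0 ≤ (t : ℤ) - x → (t : ℤ) - x ≤ (n : ℤ) - 1 →
      (t : ℤ) - x ∈ C := by
    intro t ht x hx h0 h1
    have hb := hbound x hx
    rw [hC] at hx ⊢
    refine hx.tail ⟨hb.1, hb.2, h0, h1, ?_⟩
    have : (x + ((t : ℤ) - x)).toNat = t := by omega
    rw [this]; exact ht
  have hweak : ∀ u ∈ C, ∀ v ∈ C, u ≤ v → ψ u ≤ ψ v := by
    intro u hu v hv huv
    rcases huv.lt_or_eq with h | h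
    · exact (hmono u hu v hv h).le
    · rw [h]
  have hrefl : ∀ u ∈ C, ∀ v ∈ C, ψ u ≤ ψ v → u ≤ v := by
    intro u hu v hv h
    by_contra hc
    exact absurd (hmono v hv u hu (by omega)) (by omega)
  -- counting lemma
  have hcount : ∀ x ∈ C, ∀ y ∈ C, x ≤ y →
      ((C ∩ Set.Icc x y).ncard : ℤ) = ψ y - ψ x + 1 := by
    intro x hx y hy hxy
    have hb : Set.BijOn ψ (C ∩ Set.Icc x y) (Set.Icc (ψ x) (ψ y)) := by
      refine ⟨?_, hbij.injOn.mono Set.inter_subset_left, ?_⟩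
      · rintro z ⟨hzC, hz1, hz2⟩
        exact ⟨hweak x hx z hzC hz1, hweak z hzC y hy hz2⟩
      · rintro j ⟨hj1, hj2⟩
        have hj0 : j ∈ Set.Icc 0 ((k : ℤ) - 1) :=
          ⟨le_trans (hbij.mapsTo hx).1 hj1, le_trans hj2 (hbij.mapsTo hy).2⟩
        obtain ⟨z, hz, hzj⟩ := hbij.surjOn hj0
        exact ⟨z, ⟨hz, hrefl x hx z hz (by omega), hrefl z hz y hy (by omega)⟩, hzj⟩
    have h1 : (C ∩ Set.Icc x y).ncard = (Set.Icc (ψ x) (ψ y)).ncard := by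
      rw [← hb.image_eq, Set.ncard_image_of_injOn hb.injOn]
    have h2 : (Set.Icc (ψ x) (ψ y)).ncard = (ψ y + 1 - ψ x).toNat := by
      rw [← Finset.coe_Icc, Set.ncard_coe_finset, Int.card_Icc]
    have h3 : ψ x ≤ ψ y := hweak x hx y hy hxy
    rw [h1, h2]; omega
  -- reflection lemma
  have hreflect : ∀ (t : ℕ), a t ≠ 0 → ∀ v₁ ∈ C, ∀ v₂ ∈ C, (t : ℤ) - v₁ ∈ C →
      (t : ℤ) - v₂ ∈ C → v₁ ≤ v₂ →
      (C ∩ Set.Icc v₁ v₂).ncard = (C ∩ Set.Icc ((t : ℤ) - v₂) ((t : ℤ) - v₁)).ncard := by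
    intro t ht v₁ h1 v₂ h2 h1' h2' h12
    have hb2' := hbound _ h2'
    have hb1' := hbound _ h1'
    have hb1 := hbound _ h1
    have hb2 := hbound _ h2
    have himg : (fun z => (t : ℤ) - z) '' (C ∩ Set.Icc v₁ v₂)
        = C ∩ Set.Icc ((t : ℤ) - v₂) ((t : ℤ) - v₁) := by
      ext u; constructor
      · rintro ⟨z, ⟨hzC, hz1, hz2⟩, rfl⟩
        show (t : ℤ) - z ∈ C ∩ Set.Icc ((t : ℤ) - v₂) ((t : ℤ) - v₁)
        exact ⟨hclose t ht z hzC (by omega) (by omega),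
          Set.mem_Icc.2 ⟨by omega, by omega⟩⟩
      · rintro ⟨huC, hu1, hu2⟩
        refine ⟨(t : ℤ) - u, ⟨hclose t ht u huC (by omega) (by omega),
          Set.mem_Icc.2 ⟨by omega, by omega⟩⟩, by ring⟩
    rw [← himg, Set.ncard_image_of_injOn (fun a _ b _ h => by omega)]
  -- well-definedness
  have key : ∀ (t : ℕ), a t ≠ 0 → ∀ v₁ ∈ C, ∀ v₂ ∈ C, (t : ℤ) - v₁ ∈ C → (t : ℤ) - v₂ ∈ C →
      ψ v₁ + ψ ((t : ℤ) - v₁) = ψ v₂ + ψ ((t : ℤ) - v₂) := by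
    have main : ∀ (t : ℕ), a t ≠ 0 → ∀ v₁ ∈ C, ∀ v₂ ∈ C, (t : ℤ) - v₁ ∈ C →
        (t : ℤ) - v₂ ∈ C → v₁ ≤ v₂ →
        ψ v₁ + ψ ((t : ℤ) - v₁) = ψ v₂ + ψ ((t : ℤ) - v₂) := by
      intro t ht v₁ h1 v₂ h2 h1' h2' h12
      have e1 := hcount v₁ h1 v₂ h2 h12
      have e2 := hcount ((t : ℤ) - v₂) h2' ((t : ℤ) - v₁) h1' (by omega)
      have e3 := hreflect t ht v₁ h1 v₂ h2 h1' h2' h12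
      rw [e3] at e1
      omega
    intro t ht v₁ h1 v₂ h2 h1' h2'
    rcases le_total v₁ v₂ with h | h
    · exact main t ht v₁ h1 v₂ h2 h1' h2' h
    · exact (main t ht v₂ h2 v₁ h1 h2' h1' h).symm
  -- maxima
  have hget : ∀ (t : ℕ), ∀ v ∈ C, (t : ℤ) - v ∈ C →
      ∃ m, m ∈ C ∧ (t : ℤ) - m ∈ C ∧ ∀ x ∈ C, (t : ℤ) - x ∈ C → x ≤ m := by
    intro t v hv hv'
    have hE : {x : ℤ | x ∈ C ∧ (t : ℤ) - x ∈ C}.Finite := hfin.subset (fun x hx => hx.1)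
    obtain ⟨m, hm, hmax⟩ := Set.exists_max_image _ id hE ⟨v, hv, hv'⟩
    exact ⟨m, hm.1, hm.2, fun x hx hx' => hmax x ⟨hx, hx'⟩⟩
  -- strict monotonicity of φ
  have hstrict : ∀ t₁ t₂ : ℕ, a t₁ ≠ 0 → a t₂ ≠ 0 → ∀ v₁ ∈ C, ∀ v₂ ∈ C,
      (t₁ : ℤ) - v₁ ∈ C → (t₂ : ℤ) - v₂ ∈ C → t₁ < t₂ →
      ψ v₁ + ψ ((t₁ : ℤ) - v₁) < ψ v₂ + ψ ((t₂ : ℤ) - v₂) := by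
    intro t₁ t₂ ht₁ ht₂ v₁ h1 v₂ h2 h1' h2' hlt
    obtain ⟨m₁, hm₁C, hm₁', hmax₁⟩ := hget t₁ v₁ h1 h1'
    obtain ⟨m₂, hm₂C, hm₂', hmax₂⟩ := hget t₂ v₂ h2 h2'
    have hbm₁ := hbound _ hm₁C
    have hbm₂ := hbound _ hm₂C
    have hbm₁' := hbound _ hm₁'
    have hbm₂' := hbound _ hm₂'
    have hm12 : m₁ ≤ m₂ := by
      by_contra hc
      have hx : (t₂ : ℤ) - m₁ ∈ C := hclose t₂ ht₂ m₁ hm₁C (by omega) (by omega)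
      have := hmax₂ m₁ hm₁C hx
      omega
    have hmu12 : (t₁ : ℤ) - m₁ ≤ (t₂ : ℤ) - m₂ := by
      by_contra hc
      have hx : (t₁ : ℤ) - ((t₂ : ℤ) - m₂) ∈ C :=
        hclose t₁ ht₁ ((t₂ : ℤ) - m₂) hm₂' (by omega) (by omega)
      have h5 : (t₁ : ℤ) - ((t₁ : ℤ) - ((t₂ : ℤ) - m₂)) ∈ C := by
        have : (t₁ : ℤ) - ((t₁ : ℤ) - ((t₂ : ℤ) - m₂)) = (t₂ : ℤ) - m₂ := by ring
        rw [this]; exact hm₂'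
      have := hmax₁ _ hx h5
      omega
    have e1 : ψ v₁ + ψ ((t₁ : ℤ) - v₁) = ψ m₁ + ψ ((t₁ : ℤ) - m₁) :=
      key t₁ ht₁ v₁ h1 m₁ hm₁C h1' hm₁'
    have e2 : ψ v₂ + ψ ((t₂ : ℤ) - v₂) = ψ m₂ + ψ ((t₂ : ℤ) - m₂) :=
      key t₂ ht₂ v₂ h2 m₂ hm₂C h2' hm₂'
    rw [e1, e2]
    rcases hm12.lt_or_eq with h | h
    · have := hmono m₁ hm₁C m₂ hm₂C h
      have := hweak _ hm₁' _ hm₂' hmu12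
      omega
    · have hmu : (t₁ : ℤ) - m₁ < (t₂ : ℤ) - m₂ := by omega
      have := hmono _ hm₁' _ hm₂' hmu
      have := hweak m₁ hm₁C m₂ hm₂C hm12
      omega
  refine ⟨key, ?_⟩
  intro t₁ t₂ ht₁ ht₂ v₁ h1 v₂ h2 h1' h2' heq
  rcases lt_trichotomy t₁ t₂ with h | h | h
  · exact absurd heq (by have := hstrict t₁ t₂ ht₁ ht₂ v₁ h1 v₂ h2 h1' h2' h; omega)
  · exact h
  · exact absurd heq (by have := hstrict t₂ t₁ ht₂ ht₁ v₂ h2 v₁ h1 h2' h1' h; omega)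
end

section
/- For every n×n Hankel matrix A there exist a permutation matrix P, a positive integer k, and irreducible Hankel matrices A_1,...,A_k such that P^T A P = diag(A_1,...,A_k), a block diagonal matrix. -/
section Aux


/-!
Let `K = {c₀ < c₁ < ⋯ < c_{m-1}}` be a union of connected components of the graph of a Hankel
matrix `A`, with `A i j = h (i + j)`. If `A cₚ c_q ≠ 0` then `h (cₚ + c_q) ≠ 0`, so the
reflection `x ↦ cₚ + c_q - x` maps `K` into itself wherever it stays in range. Squeezing the
neighbours of `cₚ` and `c_q` in `K` between reflected points shows
`c_{p+1} + c_{q-1} = cₚ + c_q` when either of the two entries `A cₚ c_q`, `A c_{p+1} c_{q-1}`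
is nonzero; hence both entries are equal, and `A` restricted to `K` is again Hankel. Taking for
`K` the connected components and ordering the indices component by component gives the
block diagonal form with irreducible blocks.
-/

theorem IsHankel.isSymm {n : ℕ} {A : Matrix (Fin n) (Fin n) ℝ} (hA : IsHankel A) : A.IsSymm :=
  Matrix.IsSymm.ext fun i j => hA j i i j (Nat.add_comm _ _)

def IsAdjClosed {n : ℕ} (A : Matrix (Fin n) (Fin n) ℝ) (s : Set (Fin n)) : Prop :=
  ∀ x ∈ s, ∀ y, A x y ≠ 0 → y ∈ s

theorem Relation.EqvGen.iff_of_forall_rel {α : Type*} {r : α → α → Prop} {P : α → Prop}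
    (hP : ∀ a b, r a b → (P a ↔ P b)) {a b : α} (h : Relation.EqvGen r a b) : P a ↔ P b :=
  (Equivalence.eqvGen_iff (r := fun a b => P a ↔ P b) ⟨fun _ => Iff.rfl, Iff.symm, Iff.trans⟩).1
    (Relation.EqvGen.mono hP a b h)

section Submatrix

variable {n m : ℕ} {A : Matrix (Fin n) (Fin n) ℝ} {c : Fin m → Fin n}

theorem IsHankel.exists_add_eq_of_ne_zero (hA : IsHankel A) (hs : IsAdjClosed A (Set.range c))
    {x y : Fin n} (h : A x y ≠ 0) (t : Fin m) (ht : (c t : ℕ) ≤ x + y)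
    (htn : (x + y : ℕ) - c t < n) : ∃ t', (c t' : ℕ) + c t = x + y := by
  obtain ⟨t', ht'⟩ := hs (c t) ⟨t, rfl⟩ ⟨x + y - c t, htn⟩ <| by
    rwa [hA _ _ x y (by simp only; omega)]
  exact ⟨t', by rw [ht']; simp only; omega⟩

theorem IsHankel.add_eq_of_outer_ne_zero (hA : IsHankel A) (hc : StrictMono c)
    (hs : IsAdjClosed A (Set.range c)) {p q p' q' : Fin m} (hp : (p' : ℕ) = p + 1)
    (hq : (q : ℕ) = q' + 1) (hpq : p' ≤ q') (h : A (c p) (c q) ≠ 0) :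
    (c p' : ℕ) + c q' = c p + c q := by
  have hpq' : c p ≤ c q' := hc.monotone (by omega)
  have hq'q : c q' < c q := hc (by omega)
  have hqn := (c q).isLt
  obtain ⟨t, ht⟩ := hA.exists_add_eq_of_ne_zero hs h q' (by omega) (by omega)
  have hp't : c p' ≤ c t := hc.monotone (by have : p < t := hc.lt_iff_lt.1 (by omega); omega)
  have hpp' : c p < c p' := hc (by omega)
  have hp'q : c p' ≤ c q := hc.monotone (by omega)
  obtain ⟨t', ht'⟩ := hA.exists_add_eq_of_ne_zero hs h p' (by omega) (by omega)
  have ht'q' : c t' ≤ c q' := hc.monotone (by have : t' < q := hc.lt_iff_lt.1 (by omega); omega)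
  omega

theorem IsHankel.add_eq_of_inner_ne_zero (hA : IsHankel A) (hc : StrictMono c)
    (hs : IsAdjClosed A (Set.range c)) {p q p' q' : Fin m} (hp : (p' : ℕ) = p + 1)
    (hq : (q : ℕ) = q' + 1) (hpq : p' ≤ q') (h : A (c p') (c q') ≠ 0) :
    (c p' : ℕ) + c q' = c p + c q := by
  have hpp' : c p < c p' := hc (by omega)
  have hq'q : c q' < c q := hc (by omega)
  have hp'q' : c p' ≤ c q' := hc.monotone hpq
  have hp'n := (c p').isLt
  have hqn := (c q).isLt
  by_cases hsn : (c p' : ℕ) + c q' < n + c p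
  · obtain ⟨t, ht⟩ := hA.exists_add_eq_of_ne_zero hs h p (by omega) (by omega)
    have hqt : c q ≤ c t := hc.monotone (by have : q' < t := hc.lt_iff_lt.1 (by omega); omega)
    obtain ⟨t', ht'⟩ := hA.exists_add_eq_of_ne_zero hs h q (by omega) (by omega)
    have ht'p : c t' ≤ c p := hc.monotone (by have : t' < p' := hc.lt_iff_lt.1 (by omega); omega)
    omega
  · -- the reflection of `c q` would lie strictly between `c p` and `c p'`
    obtain ⟨t', ht'⟩ := hA.exists_add_eq_of_ne_zero hs h q (by omega) (by omega)
    have hpt' : p < t' := hc.lt_iff_lt.1 (by omega)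
    have ht'p' : t' < p' := hc.lt_iff_lt.1 (by omega)
    omega

theorem IsHankel.apply_eq_apply_succ_pred (hA : IsHankel A) (hc : StrictMono c)
    (hs : IsAdjClosed A (Set.range c)) {p q p' q' : Fin m} (hp : (p' : ℕ) = p + 1)
    (hq : (q : ℕ) = q' + 1) (hpq : p' ≤ q') : A (c p) (c q) = A (c p') (c q') := by
  by_cases h : A (c p) (c q) = 0
  · by_cases h' : A (c p') (c q') = 0
    · rw [h, h']
    · exact hA _ _ _ _ (hA.add_eq_of_inner_ne_zero hc hs hp hq hpq h').symm
  · exact hA _ _ _ _ (hA.add_eq_of_outer_ne_zero hc hs hp hq hpq h).symm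

theorem IsHankel.apply_eq_apply_add_sub (hA : IsHankel A) (hc : StrictMono c)
    (hs : IsAdjClosed A (Set.range c)) :
    ∀ (d : ℕ) {p q p' q' : Fin m}, (p' : ℕ) = p + d → (q : ℕ) = q' + d → p' ≤ q' →
      A (c p) (c q) = A (c p') (c q')
  | 0, p, q, p', q', hp, hq, _ => by
    rw [Fin.ext (a := p') (b := p) hp, Fin.ext (a := q) (b := q') hq]
  | d + 1, p, q, p', q', hp, hq, hpq =>
    (hA.apply_eq_apply_succ_pred hc hs (p' := ⟨p + 1, by omega⟩) (q' := ⟨q - 1, by omega⟩)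
      rfl (by simp only; omega) (Fin.le_def.2 (by simp only; omega))).trans
      (hA.apply_eq_apply_add_sub hc hs d (by simp only; omega) (by simp only; omega) hpq)

theorem IsHankel.submatrix (hA : IsHankel A) (hc : StrictMono c)
    (hs : IsAdjClosed A (Set.range c)) : IsHankel (A.submatrix c c) := by
  have sorted : ∀ p q, A.submatrix c c p q = A.submatrix c c (min p q) (max p q) := by
    intro p q
    rcases le_total p q with h | h
    · rw [min_eq_left h, max_eq_right h]
    · rw [min_eq_right h, max_eq_left h, (hA.isSymm.submatrix c).apply]
  intro p q p' q' hsum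
  rw [sorted p q, sorted p' q']
  have hsum' : ((min p q : Fin m) : ℕ) + (max p q : Fin m) =
      (min p' q' : Fin m) + (max p' q' : Fin m) := by
    simp only [Fin.coe_min, Fin.coe_max]; omega
  rcases le_total (min p q) (min p' q') with h | h
  · exact hA.apply_eq_apply_add_sub hc hs ((min p' q' : Fin m) - (min p q : Fin m) : ℕ)
      (by omega) (by omega) min_le_max
  · exact (hA.apply_eq_apply_add_sub hc hs ((min p q : Fin m) - (min p' q' : Fin m) : ℕ)
      (by omega) (by omega) min_le_max).symm

theorem matIrreducible_submatrix (hA : A.IsSymm) (hc : Function.Injective c)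
    (hs : IsAdjClosed A (Set.range c))
    (hconn : ∀ p q, Relation.EqvGen (fun x y => A x y ≠ 0) (c p) (c q)) :
    MatIrreducible (A.submatrix c c) := by
  rintro ⟨σ, r, hr, hrm, hzero⟩
  let P : Fin n → Prop := fun x => ∃ t, c t = x ∧ (σ t : ℕ) < r
  have forward : ∀ x y, A x y ≠ 0 → P x → P y := by
    rintro x y hxy ⟨t, rfl, ht⟩
    obtain ⟨t', rfl⟩ := hs _ ⟨t, rfl⟩ y hxy
    exact ⟨t', rfl, not_le.1 fun ht' => hxy (by rw [← hA.apply]; exact hzero t' t ht' ht)⟩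
  let p₀ := σ.symm ⟨0, by omega⟩
  let q₀ := σ.symm ⟨r, hrm⟩
  obtain ⟨t, ht, htr⟩ := ((hconn p₀ q₀).iff_of_forall_rel fun x y h =>
    ⟨forward x y h, forward y x (by rwa [hA.apply])⟩).1 ⟨p₀, rfl, by simp [p₀, hr]⟩
  rw [hc ht] at htr
  simp [q₀] at htr

end Submatrix

section Fibers

variable {n k : ℕ} (f : Fin n → Fin k)

abbrev fiberCard (i : Fin k) : ℕ := Fintype.card {x // f x = i}

def fiberOrderIso (i : Fin k) : Fin (fiberCard f i) ≃o {x // f x = i} :=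
  Fintype.orderIsoFinOfCardEq _ rfl

def fiberEnum (i : Fin k) (p : Fin (fiberCard f i)) : Fin n := fiberOrderIso f i p

def sigmaFiberFinEquiv : (Σ i, Fin (fiberCard f i)) ≃ Fin n :=
  (Equiv.sigmaCongrRight fun i => (fiberOrderIso f i).toEquiv).trans (Equiv.sigmaFiberEquiv f)

theorem sigmaFiberFinEquiv_apply (x : Σ i, Fin (fiberCard f i)) :
    sigmaFiberFinEquiv f x = fiberEnum f x.1 x.2 := rfl

theorem fiberEnum_strictMono (i : Fin k) : StrictMono (fiberEnum f i) :=
  (Subtype.strictMono_coe _).comp (fiberOrderIso f i).strictMono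

theorem apply_fiberEnum (i : Fin k) (p : Fin (fiberCard f i)) : f (fiberEnum f i p) = i :=
  (fiberOrderIso f i p).2

theorem mem_range_fiberEnum {i : Fin k} {x : Fin n} : x ∈ Set.range (fiberEnum f i) ↔ f x = i :=
  ⟨by rintro ⟨p, rfl⟩; exact apply_fiberEnum f i p,
    fun h => ⟨(fiberOrderIso f i).symm ⟨x, h⟩, by simp [fiberEnum]⟩⟩

variable {f} {A : Matrix (Fin n) (Fin n) ℝ}

theorem isAdjClosed_range_fiberEnum (hf : ∀ x y, A x y ≠ 0 → f x = f y) (i : Fin k) :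
    IsAdjClosed A (Set.range (fiberEnum f i)) := by
  rintro _ ⟨p, rfl⟩ y h
  rw [mem_range_fiberEnum, ← hf _ _ h, apply_fiberEnum f]

theorem apply_sigmaFiberFinEquiv (hf : ∀ x y, A x y ≠ 0 → f x = f y)
    (x y : Σ i, Fin (fiberCard f i)) :
    A (sigmaFiberFinEquiv f x) (sigmaFiberFinEquiv f y) =
      Matrix.blockDiagonal' (fun i => A.submatrix (fiberEnum f i) (fiberEnum f i)) x y := by
  obtain ⟨i, p⟩ := x
  obtain ⟨j, q⟩ := y
  by_cases hij : i = j
  · subst hij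
    simp [sigmaFiberFinEquiv_apply, Matrix.blockDiagonal'_apply_eq]
  · rw [Matrix.blockDiagonal'_apply_ne _ _ _ hij]
    by_contra h
    exact hij (by simpa only [sigmaFiberFinEquiv_apply, apply_fiberEnum] using hf _ _ h)

end Fibers

theorem exists_fin_eqvGen_classes {n : ℕ} (r : Fin n → Fin n → Prop) :
    ∃ (k : ℕ) (_ : 0 < k) (f : Fin n → Fin k), ∀ x y, f x = f y ↔ Relation.EqvGen r x y := by
  rcases n.eq_zero_or_pos with rfl | hn
  · exact ⟨1, one_pos, Fin.elim0, fun x => x.elim0⟩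
  · have : Nonempty (Quot r) := ⟨Quot.mk r ⟨0, hn⟩⟩
    refine ⟨Nat.card (Quot r), Nat.card_pos, fun x => Finite.equivFin _ (Quot.mk r x), fun x y => ?_⟩
    rw [(Finite.equivFin _).injective.eq_iff]
    exact ⟨Quot.eqvGen_exact, Quot.eqvGen_sound⟩

/-- The Frobenius normal form of a Hankel matrix: for every Hankel matrix `A` there are a
permutation of indices and irreducible Hankel blocks `A₁, ..., A_k` with
`PᵀAP = diag(A₁,...,A_k)`. -/
theorem stmt_12 (n : ℕ) (A : Matrix (Fin n) (Fin n) ℝ) (hA : IsHankel A) :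
    ∃ (k : ℕ) (_ : 0 < k) (d : Fin k → ℕ)
      (blocks : ∀ i : Fin k, Matrix (Fin (d i)) (Fin (d i)) ℝ)
      (e : (Σ i : Fin k, Fin (d i)) ≃ Fin n),
      (∀ x y : Σ i : Fin k, Fin (d i), A (e x) (e y) = Matrix.blockDiagonal' blocks x y) ∧
      (∀ i, IsHankel (blocks i)) ∧
      (∀ i, MatIrreducible (blocks i)) := by
  obtain ⟨k, hk, f, hf⟩ := exists_fin_eqvGen_classes fun x y : Fin n => A x y ≠ 0
  have hadj : ∀ x y, A x y ≠ 0 → f x = f y := fun x y h => (hf x y).2 (.rel _ _ h)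
  refine ⟨k, hk, fiberCard f, fun i => A.submatrix (fiberEnum f i) (fiberEnum f i),
    sigmaFiberFinEquiv f, apply_sigmaFiberFinEquiv hadj, fun i => ?_, fun i => ?_⟩
  · exact hA.submatrix (fiberEnum_strictMono f i) (isAdjClosed_range_fiberEnum hadj i)
  · refine matIrreducible_submatrix hA.isSymm (fiberEnum_strictMono f i).injective
      (isAdjClosed_range_fiberEnum hadj i) fun p q => (hf _ _).1 ?_
    rw [apply_fiberEnum f, apply_fiberEnum f]
end Aux
end

section
/- There exists a Hankel matrix A such that, among the connected components of its weighted Hankel graph G(A), there are two components C and C' with neither C isomorphic to an induced subgraph of C' nor C' isomorphic to an induced subgraph of C. (For example, A = H[0,3,0,5,0,0,0,0,0,0,0,2,2,4,0] of order 8.) Hence the ordering property of components of weighted Toeplitz graphs fails for weighted Hankel graphs. -/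
/-- The example sequence `H[0,3,0,5,0,0,0,0,0,0,0,2,2,4,0]`. -/
noncomputable def exA : ℕ → ℝ := fun t =>
  if t = 1 then 3 else if t = 3 then 5 else if t = 11 then 2
  else if t = 12 then 2 else if t = 13 then 4 else 0

lemma exA_supp (t : ℕ) (h : exA t ≠ 0) :
    t = 1 ∨ t = 3 ∨ t = 11 ∨ t = 12 ∨ t = 13 := by
  simp only [exA] at h
  split_ifs at h <;> tauto

lemma exA_reach0 (x : ℤ) (h : HReach 8 exA 0 x) : 0 ≤ x ∧ x ≤ 3 := by
  induction h with
  | refl => omega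
  | tail hb hadj ih =>
    obtain ⟨hu0, hu1, hv0, hv1, hne⟩ := hadj
    rcases exA_supp _ hne with h | h | h | h | h <;> omega

lemma exA_reach4 (x : ℤ) (h : HReach 8 exA 4 x) : 4 ≤ x ∧ x ≤ 7 := by
  induction h with
  | refl => omega
  | tail hb hadj ih =>
    obtain ⟨hu0, hu1, hv0, hv1, hne⟩ := hadj
    rcases exA_supp _ hne with h | h | h | h | h <;> omega

/-- There is a Hankel matrix whose weighted Hankel graph has two components `C`, `C'`
such that neither is isomorphic (preserving adjacency, non-adjacency and weights) to an
induced subgraph of the other. -/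
theorem stmt_13 :
    ∃ (n : ℕ) (a : ℕ → ℝ) (w w' : ℤ) (C C' : Set ℤ),
      (0 ≤ w ∧ w ≤ (n : ℤ) - 1) ∧ (0 ≤ w' ∧ w' ≤ (n : ℤ) - 1) ∧
      C = {x : ℤ | HReach n a w x} ∧ C' = {x : ℤ | HReach n a w' x} ∧
      ¬ HReach n a w w' ∧
      ¬ (∃ f : ℤ → ℤ, Set.InjOn f C ∧ Set.MapsTo f C C' ∧
          ∀ u ∈ C, ∀ v ∈ C, (HAdj n a u v ↔ HAdj n a (f u) (f v)) ∧
            (HAdj n a u v → a (u + v).toNat = a (f u + f v).toNat)) ∧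
      ¬ (∃ f : ℤ → ℤ, Set.InjOn f C' ∧ Set.MapsTo f C' C ∧
          ∀ u ∈ C', ∀ v ∈ C', (HAdj n a u v ↔ HAdj n a (f u) (f v)) ∧
            (HAdj n a u v → a (u + v).toNat = a (f u + f v).toNat)) := by
  refine ⟨8, exA, 0, 4, {x : ℤ | HReach 8 exA 0 x}, {x : ℤ | HReach 8 exA 4 x},
    ⟨by norm_num, by norm_num⟩, ⟨by norm_num, by norm_num⟩, rfl, rfl, ?_, ?_, ?_⟩
  · intro h
    have := exA_reach0 _ h
    omega
  · rintro ⟨f, hinj, hmaps, hpres⟩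
    have h0 : (0 : ℤ) ∈ {x : ℤ | HReach 8 exA 0 x} := Relation.ReflTransGen.refl
    have hadj01 : HAdj 8 exA 0 1 := by
      refine ⟨by norm_num, by norm_num, by norm_num, by norm_num, ?_⟩
      norm_num [exA]
    have h1 : (1 : ℤ) ∈ {x : ℤ | HReach 8 exA 0 x} :=
      Relation.ReflTransGen.single hadj01
    have hw := (hpres 0 h0 1 h1).2 hadj01
    have hf0 := exA_reach4 _ (hmaps h0)
    have hf1 := exA_reach4 _ (hmaps h1)
    have ht : (f 0 + f 1).toNat = 8 ∨ (f 0 + f 1).toNat = 9 ∨ (f 0 + f 1).toNat = 10 ∨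
        (f 0 + f 1).toNat = 11 ∨ (f 0 + f 1).toNat = 12 ∨ (f 0 + f 1).toNat = 13 ∨
        (f 0 + f 1).toNat = 14 := by omega
    have h01 : ((0 : ℤ) + 1).toNat = 1 := rfl
    rw [h01] at hw
    rcases ht with h | h | h | h | h | h | h <;> rw [h] at hw <;> norm_num [exA] at hw
  · rintro ⟨f, hinj, hmaps, hpres⟩
    have hadj47 : HAdj 8 exA 4 7 := by
      refine ⟨by norm_num, by norm_num, by norm_num, by norm_num, ?_⟩
      show exA 11 ≠ 0
      norm_num [exA]
    have hadj76 : HAdj 8 exA 7 6 := by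
      refine ⟨by norm_num, by norm_num, by norm_num, by norm_num, ?_⟩
      show exA 13 ≠ 0
      norm_num [exA]
    have hadj67 : HAdj 8 exA 6 7 := by
      refine ⟨by norm_num, by norm_num, by norm_num, by norm_num, ?_⟩
      show exA 13 ≠ 0
      norm_num [exA]
    have h7 : (7 : ℤ) ∈ {x : ℤ | HReach 8 exA 4 x} :=
      Relation.ReflTransGen.single hadj47
    have h6 : (6 : ℤ) ∈ {x : ℤ | HReach 8 exA 4 x} :=
      Relation.ReflTransGen.tail h7 hadj76
    have hw := (hpres 6 h6 7 h7).2 hadj67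
    have hf6 := exA_reach0 _ (hmaps h6)
    have hf7 := exA_reach0 _ (hmaps h7)
    have ht : (f 6 + f 7).toNat = 0 ∨ (f 6 + f 7).toNat = 1 ∨ (f 6 + f 7).toNat = 2 ∨
        (f 6 + f 7).toNat = 3 ∨ (f 6 + f 7).toNat = 4 ∨ (f 6 + f 7).toNat = 5 ∨
        (f 6 + f 7).toNat = 6 := by omega
    have h67 : ((6 : ℤ) + 7).toNat = 13 := rfl
    rw [h67] at hw
    rcases ht with h | h | h | h | h | h | h <;> rw [h] at hw <;> norm_num [exA] at hw
end
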